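/- arXiv:1702.01834 — 2 statements merged into one kernel-verified Lean document; each statement's English description precedes it below -/
import Mathlib

section
/- Let k ≥ 3 be an integer and ε > 0 be fixed. If p ≤ (1−ε)·√((k−1)! · log n / n^k), then a.a.s. the random k-uniform hypergraph H_{n,p}^{(k)} does not have property 𝒯 (is not 𝒯-connected). -/
open Finset Filter
open scoped Classical

def kSets (n k : ℕ) : Finset (Finset (Fin n)) := Finset.powersetCard k Finset.univ

noncomputable def prH (n k : ℕ) (p : ℝ) (P : Finset (Finset (Fin n)) → Prop) : ℝ :=
  ∑ E ∈ (kSets n k).powerset,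
    if P E then p ^ E.card * (1 - p) ^ ((kSets n k).card - E.card) else 0

noncomputable def expH (n k : ℕ) (p : ℝ) (X : Finset (Finset (Fin n)) → ℝ) : ℝ :=
  ∑ E ∈ (kSets n k).powerset,
    p ^ E.card * (1 - p) ^ ((kSets n k).card - E.card) * X E

/-- A `1`-offset `uv`-trail with `m` edges `E 0, …, E (m-1)` in the `k`-uniform
hypergraph `H`: the edges are distinct edges of `H`, successive edges meet in either
`k - 1` or `1` vertices in an alternating fashion, the first two edges share `k - 1`
vertices with `u` the vertex of `E 0` outside `E 1`, and the last two edges share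
`k - 1` vertices with `v` the vertex of `E (m-1)` outside `E (m-2)`. -/
def IsOffsetTrail {V : Type*} [DecidableEq V] (k : ℕ) (H : Finset (Finset V))
    (u v : V) (m : ℕ) (E : ℕ → Finset V) : Prop :=
  2 ≤ m ∧
  Set.InjOn E (Set.Iio m) ∧
  (∀ i < m, E i ∈ H) ∧
  (∀ i, i + 1 < m →
    (E i ∩ E (i + 1)).card = k - 1 ∨ (E i ∩ E (i + 1)).card = 1) ∧
  (∀ i, i + 2 < m →
    (E i ∩ E (i + 1)).card ≠ (E (i + 1) ∩ E (i + 2)).card) ∧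
  (E 0 ∩ E 1).card = k - 1 ∧ u ∈ E 0 ∧ u ∉ E 1 ∧
  (E (m - 2) ∩ E (m - 1)).card = k - 1 ∧ v ∈ E (m - 1) ∧ v ∉ E (m - 2)

/-- Property 𝒯: every pair of distinct vertices is joined by a `1`-offset trail. -/
def TConnected (k n : ℕ) (H : Finset (Finset (Fin n))) : Prop :=
  ∀ u v : Fin n, u ≠ v → ∃ (m : ℕ) (E : ℕ → Finset (Fin n)), IsOffsetTrail k H u v m E

/-!
A vertex `u` is *cherryless* if no two edges `e ∋ u` and `f ∌ u` share `k - 1` vertices. Every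
`1`-offset trail starting at `u` begins with such a pair of edges (a cherry), so a cherryless
vertex destroys property 𝒯. There are at most `n ^ k / (k - 1)!` cherries at `u`, each present
with probability `p ^ 2`, so by Harris' inequality `u` is cherryless with probability at least
`(1 - p ^ 2) ^ (n ^ k / (k - 1)!) ≥ n ^ (ε - 1)`, and the expected number of cherryless vertices
is at least `n ^ ε`. For `k ≥ 3` two cherries at distinct vertices rarely share an edge, and
Janson's inequality shows that the events "`u` is cherryless" and "`v` is cherryless" are
asymptotically uncorrelated; the second moment method then yields a cherryless vertex a.a.s.
-/

namespace RandomSubset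

variable {α : Type*}

/-- Expectation of `f` at the random subset of `M` containing each element independently with
probability `p`. -/
noncomputable def expect (M : Finset α) (p : ℝ) (f : Finset α → ℝ) : ℝ :=
  ∑ E ∈ M.powerset, p ^ E.card * (1 - p) ^ (M.card - E.card) * f E

noncomputable def prob (M : Finset α) (p : ℝ) (P : Finset α → Prop) : ℝ :=
  expect M p fun E => if P E then 1 else 0

section Expectation

variable {M : Finset α} {p : ℝ}

lemma expect_empty (p : ℝ) (f : Finset α → ℝ) : expect ∅ p f = f ∅ := by
  simp [expect]

lemma expect_congr {f g : Finset α → ℝ} (h : ∀ E ⊆ M, f E = g E) :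
    expect M p f = expect M p g :=
  sum_congr rfl fun E hE => by rw [h E (mem_powerset.1 hE)]

lemma expect_add (f g : Finset α → ℝ) :
    expect M p (fun E => f E + g E) = expect M p f + expect M p g := by
  simp only [expect, mul_add, sum_add_distrib]

lemma expect_neg (f : Finset α → ℝ) : expect M p (fun E => -f E) = -expect M p f := by
  simp only [expect, mul_neg, sum_neg_distrib]

lemma expect_sub (f g : Finset α → ℝ) :
    expect M p (fun E => f E - g E) = expect M p f - expect M p g := by
  simp only [expect, mul_sub, sum_sub_distrib]

lemma expect_const_mul (c : ℝ) (f : Finset α → ℝ) :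
    expect M p (fun E => c * f E) = c * expect M p f := by
  simp only [expect, mul_sum]
  exact sum_congr rfl fun _ _ => by ring

lemma expect_sum {ι : Type*} (s : Finset ι) (f : ι → Finset α → ℝ) :
    expect M p (fun E => ∑ i ∈ s, f i E) = ∑ i ∈ s, expect M p (f i) := by
  simp only [expect, mul_sum]
  exact sum_comm

lemma expect_const (M : Finset α) (p c : ℝ) : expect M p (fun _ => c) = c := by
  rw [expect, ← sum_mul, sum_pow_mul_eq_add_pow, add_sub_cancel, one_pow, one_mul]

lemma expect_mono (hp₀ : 0 ≤ p) (hp₁ : p ≤ 1) {f g : Finset α → ℝ} (h : ∀ E ⊆ M, f E ≤ g E) :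
    expect M p f ≤ expect M p g :=
  sum_le_sum fun E hE => mul_le_mul_of_nonneg_left (h E (mem_powerset.1 hE))
    (mul_nonneg (pow_nonneg hp₀ _) (pow_nonneg (sub_nonneg.2 hp₁) _))

variable [DecidableEq α]

lemma expect_insert {a : α} (ha : a ∉ M) (p : ℝ) (f : Finset α → ℝ) :
    expect (insert a M) p f
      = p * expect M p (fun E => f (insert a E)) + (1 - p) * expect M p f := by
  have hinj : Set.InjOn (insert a) (M.powerset : Set (Finset α)) := fun E hE F hF h => by
    have haE : a ∉ E := fun h' => ha (mem_powerset.1 hE h')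
    have haF : a ∉ F := fun h' => ha (mem_powerset.1 hF h')
    rw [← erase_insert haE, ← erase_insert haF, h]
  have hdisj : Disjoint M.powerset (M.powerset.image (insert a)) :=
    disjoint_left.2 fun E hE hE' => by
      obtain ⟨F, -, rfl⟩ := mem_image.1 hE'
      exact ha (mem_powerset.1 hE (mem_insert_self a F))
  rw [expect, powerset_insert, sum_union hdisj, sum_image hinj, add_comm, expect, expect,
    mul_sum, mul_sum]
  congr 1 <;> refine sum_congr rfl fun E hE => ?_
  · have hEM := mem_powerset.1 hE
    have hc := card_le_card hEM
    rw [card_insert_of_notMem fun h => ha (hEM h), card_insert_of_notMem ha,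
      Nat.add_sub_add_right, pow_succ]
    ring
  · have hc := card_le_card (mem_powerset.1 hE)
    rw [card_insert_of_notMem ha, show M.card + 1 - E.card = M.card - E.card + 1 by omega,
      pow_succ]
    ring

/-- Harris' inequality. -/
lemma expect_mul_expect_le (hp₀ : 0 ≤ p) (hp₁ : p ≤ 1) {f g : Finset α → ℝ}
    (hf : Monotone f) (hg : Monotone g) :
    expect M p f * expect M p g ≤ expect M p (fun E => f E * g E) := by
  induction M using Finset.induction_on generalizing f g with
  | empty => simp only [expect_empty, le_refl]
  | insert a M ha ih =>
    simp only [expect_insert ha]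
    have hins : Monotone (insert a : Finset α → Finset α) := fun _ _ h => insert_subset_insert a h
    have h₁ := ih (hf.comp hins) (hg.comp hins)
    have h₀ := ih hf hg
    have hF := expect_mono (M := M) hp₀ hp₁ fun E _ => hf (subset_insert a E)
    have hG := expect_mono (M := M) hp₀ hp₁ fun E _ => hg (subset_insert a E)
    simp only [Function.comp_def] at h₁ hF hG
    nlinarith [mul_nonneg (sub_nonneg.2 hF) (sub_nonneg.2 hG), mul_nonneg hp₀ (sub_nonneg.2 hp₁),
      mul_le_mul_of_nonneg_left h₁ hp₀, mul_le_mul_of_nonneg_left h₀ (sub_nonneg.2 hp₁)]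

lemma expect_mul_expect_le_of_antitone (hp₀ : 0 ≤ p) (hp₁ : p ≤ 1) {f g : Finset α → ℝ}
    (hf : Antitone f) (hg : Antitone g) :
    expect M p f * expect M p g ≤ expect M p (fun E => f E * g E) := by
  have := expect_mul_expect_le (M := M) hp₀ hp₁ hf.neg hg.neg
  simpa only [expect_neg, neg_mul_neg] using this

lemma expect_mul_le_of_monotone_of_antitone (hp₀ : 0 ≤ p) (hp₁ : p ≤ 1) {f g : Finset α → ℝ}
    (hf : Monotone f) (hg : Antitone g) :
    expect M p (fun E => f E * g E) ≤ expect M p f * expect M p g := by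
  have := expect_mul_expect_le (M := M) hp₀ hp₁ hf hg.neg
  simp only [expect_neg, mul_neg] at this
  linarith

end Expectation

lemma monotone_ite_one_zero {β : Type*} [Preorder β] {P : β → Prop} (hP : Monotone P) :
    Monotone fun b => if P b then (1 : ℝ) else 0 := fun a b h => by
  by_cases hb : P b
  · simp only [hb, if_true]; split_ifs <;> norm_num
  · simp only [if_neg hb, if_neg fun ha => hb (hP h ha), le_refl]

lemma antitone_ite_one_zero {β : Type*} [Preorder β] {P : β → Prop} (hP : Antitone P) :
    Antitone fun b => if P b then (1 : ℝ) else 0 := fun a b h => by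
  by_cases ha : P a
  · simp only [ha, if_true]; split_ifs <;> norm_num
  · simp only [if_neg ha, if_neg fun hb => ha (hP h hb), le_refl]

section Probability

variable {M : Finset α} {p : ℝ}

lemma prob_congr {P Q : Finset α → Prop} (h : ∀ E ⊆ M, P E ↔ Q E) :
    prob M p P = prob M p Q :=
  expect_congr fun E hE => by simp only [h E hE]

lemma prob_mono (hp₀ : 0 ≤ p) (hp₁ : p ≤ 1) {P Q : Finset α → Prop}
    (h : ∀ E ⊆ M, P E → Q E) : prob M p P ≤ prob M p Q :=
  expect_mono hp₀ hp₁ fun E hE => by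
    by_cases hP : P E
    · simp [hP, h E hE hP]
    · split_ifs <;> norm_num

lemma prob_true (M : Finset α) (p : ℝ) : prob M p (fun _ => True) = 1 := by
  simp only [prob, if_true, expect_const]

lemma prob_nonneg (hp₀ : 0 ≤ p) (hp₁ : p ≤ 1) (P : Finset α → Prop) : 0 ≤ prob M p P := by
  have := expect_mono (M := M) hp₀ hp₁ (f := fun _ => 0)
    (g := fun E => if P E then (1 : ℝ) else 0) fun E _ => by split_ifs <;> norm_num
  rwa [expect_const] at this

lemma prob_le_one (hp₀ : 0 ≤ p) (hp₁ : p ≤ 1) (P : Finset α → Prop) : prob M p P ≤ 1 :=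
  (prob_mono hp₀ hp₁ fun _ _ _ => trivial).trans_eq (prob_true M p)

lemma prob_and_not (P Q : Finset α → Prop) :
    prob M p (fun E => P E ∧ ¬ Q E) = prob M p P - prob M p (fun E => P E ∧ Q E) := by
  rw [eq_sub_iff_add_eq, prob, prob, prob, ← expect_add]
  exact expect_congr fun E _ => by by_cases hP : P E <;> by_cases hQ : Q E <;> simp [hP, hQ]

lemma prob_and_eq_expect_mul (P Q : Finset α → Prop) :
    prob M p (fun E => P E ∧ Q E)
      = expect M p (fun E => (if P E then 1 else 0) * (if Q E then 1 else 0)) :=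
  expect_congr fun E _ => by by_cases hP : P E <;> by_cases hQ : Q E <;> simp [hP, hQ]

lemma prob_not (P : Finset α → Prop) : prob M p (fun E => ¬ P E) = 1 - prob M p P := by
  have := prob_and_not (M := M) (p := p) (fun _ => True) P
  simp only [true_and, prob_true] at this
  exact this

lemma prob_le_prob_add_sum (hp₀ : 0 ≤ p) (hp₁ : p ≤ 1) {ι : Type*} (s : Finset ι)
    {P Q : Finset α → Prop} (A : ι → Finset α → Prop)
    (h : ∀ E ⊆ M, P E → Q E ∨ ∃ j ∈ s, A j E) :
    prob M p P ≤ prob M p Q + ∑ j ∈ s, prob M p (A j) := by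
  simp only [prob]
  rw [← expect_sum, ← expect_add]
  refine expect_mono hp₀ hp₁ fun E hE => ?_
  have hsum : ∀ j ∈ s, (0 : ℝ) ≤ if A j E then 1 else 0 := fun j _ => by split_ifs <;> norm_num
  have hQ : (0 : ℝ) ≤ if Q E then 1 else 0 := by split_ifs <;> norm_num
  by_cases hP : P E
  · rw [if_pos hP]
    rcases h E hE hP with hQE | ⟨j, hj, hA⟩
    · rw [if_pos hQE]; linarith [sum_nonneg hsum]
    · have := single_le_sum hsum hj
      rw [if_pos hA] at this
      linarith
  · rw [if_neg hP]; linarith [sum_nonneg hsum]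

lemma prob_forall_not_mul_sq_le (hp₀ : 0 ≤ p) (hp₁ : p ≤ 1) {ι : Type*} (s : Finset ι)
    (A : ι → Finset α → Prop) :
    prob M p (fun E => ∀ u ∈ s, ¬ A u E) * (∑ u ∈ s, prob M p (A u)) ^ 2
      ≤ ∑ u ∈ s, ∑ v ∈ s, prob M p (fun E => A u E ∧ A v E) - (∑ u ∈ s, prob M p (A u)) ^ 2 := by
  set X : Finset α → ℝ := fun E => ∑ u ∈ s, if A u E then 1 else 0
  set μ := ∑ u ∈ s, prob M p (A u)
  have hX : expect M p X = μ := expect_sum _ _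
  have hX2 : expect M p (fun E => X E ^ 2)
      = ∑ u ∈ s, ∑ v ∈ s, prob M p (fun E => A u E ∧ A v E) := by
    simp only [X, sq, sum_mul_sum, expect_sum, prob_and_eq_expect_mul]
  have hvar : expect M p (fun E => (X E - μ) ^ 2) = expect M p (fun E => X E ^ 2) - μ ^ 2 := by
    rw [expect_congr (g := fun E => (X E ^ 2 - (2 * μ) * X E) + μ ^ 2) fun E _ => by ring,
      expect_add, expect_sub, expect_const_mul, expect_const, hX]
    ring
  have hcheb : prob M p (fun E => ∀ u ∈ s, ¬ A u E) * μ ^ 2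
      ≤ expect M p (fun E => (X E - μ) ^ 2) := by
    rw [mul_comm, prob, ← expect_const_mul]
    refine expect_mono hp₀ hp₁ fun E _ => ?_
    split_ifs with h
    · simp only [X, sum_eq_zero fun u hu => if_neg (h u hu), zero_sub, neg_sq, mul_one, le_refl]
    · simp only [mul_zero]; positivity
  rwa [← hX2, ← hvar]

/-- The second moment method. -/
lemma prob_forall_not_le (hp₀ : 0 ≤ p) (hp₁ : p ≤ 1) {ι : Type*} [DecidableEq ι] {s : Finset ι}
    (hs : s.Nonempty) {A : ι → Finset α → Prop} {ℓ c : ℝ} (hℓ : 0 < ℓ)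
    (hA : ∀ u ∈ s, ℓ ≤ prob M p (A u)) (hc : 0 ≤ c)
    (hAA : ∀ u ∈ s, ∀ v ∈ s, u ≠ v →
      prob M p (fun E => A u E ∧ A v E) ≤ c * (prob M p (A u) * prob M p (A v))) :
    prob M p (fun E => ∀ u ∈ s, ¬ A u E) ≤ 1 / (s.card * ℓ) + (c - 1) := by
  set μ := ∑ u ∈ s, prob M p (A u)
  have hμ : s.card * ℓ ≤ μ := by simpa using card_nsmul_le_sum s _ ℓ hA
  have hμ₀ : 0 < μ := lt_of_lt_of_le (mul_pos (by exact_mod_cast hs.card_pos) hℓ) hμ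
  have hrow : ∀ u ∈ s, ∑ v ∈ s, prob M p (fun E => A u E ∧ A v E)
      ≤ prob M p (A u) + c * ∑ v ∈ s, prob M p (A u) * prob M p (A v) := fun u hu => by
    have hPP : ∀ v ∈ s, 0 ≤ prob M p (A u) * prob M p (A v) := fun v _ =>
      mul_nonneg (prob_nonneg hp₀ hp₁ _) (prob_nonneg hp₀ hp₁ _)
    rw [← add_sum_erase s _ hu]
    simp only [and_self]
    gcongr
    calc ∑ v ∈ s.erase u, prob M p (fun E => A u E ∧ A v E)
        ≤ ∑ v ∈ s.erase u, c * (prob M p (A u) * prob M p (A v)) :=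
          sum_le_sum fun v hv => hAA u hu v (mem_of_mem_erase hv) (ne_of_mem_erase hv).symm
      _ ≤ c * ∑ v ∈ s, prob M p (A u) * prob M p (A v) := by
          rw [← mul_sum]
          exact mul_le_mul_of_nonneg_left
            (sum_le_sum_of_subset_of_nonneg (erase_subset u s) fun v hv _ => hPP v hv) hc
  have hpairs : ∑ u ∈ s, ∑ v ∈ s, prob M p (fun E => A u E ∧ A v E) ≤ μ + c * μ ^ 2 := by
    rw [sq, sum_mul_sum, mul_sum, ← sum_add_distrib]
    exact sum_le_sum hrow
  have h := (prob_forall_not_mul_sq_le hp₀ hp₁ s A).trans (sub_le_sub_right hpairs _)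
  calc prob M p (fun E => ∀ u ∈ s, ¬ A u E) ≤ 1 / μ + (c - 1) := by
        rw [← sub_le_iff_le_add, le_div_iff₀ hμ₀]
        nlinarith
    _ ≤ 1 / (s.card * ℓ) + (c - 1) := by gcongr

variable [DecidableEq α]

lemma prob_insert {a : α} (ha : a ∉ M) (p : ℝ) (P : Finset α → Prop) :
    prob (insert a M) p P = p * prob M p (fun E => P (insert a E)) + (1 - p) * prob M p P :=
  expect_insert ha p _

lemma prob_and_le_mul (hp₀ : 0 ≤ p) (hp₁ : p ≤ 1) {P Q : Finset α → Prop}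
    (hP : Monotone P) (hQ : Antitone Q) :
    prob M p (fun E => P E ∧ Q E) ≤ prob M p P * prob M p Q := by
  rw [prob_and_eq_expect_mul]
  exact expect_mul_le_of_monotone_of_antitone hp₀ hp₁ (monotone_ite_one_zero hP)
    (antitone_ite_one_zero hQ)

lemma prob_mul_le_prob_and (hp₀ : 0 ≤ p) (hp₁ : p ≤ 1) {P Q : Finset α → Prop}
    (hP : Antitone P) (hQ : Antitone Q) :
    prob M p P * prob M p Q ≤ prob M p (fun E => P E ∧ Q E) := by
  rw [prob_and_eq_expect_mul]
  exact expect_mul_expect_le_of_antitone hp₀ hp₁ (antitone_ite_one_zero hP)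
    (antitone_ite_one_zero hQ)

lemma prob_subset_and {D : Finset α} (hD : D ⊆ M) {Q : Finset α → Prop}
    (hQ : ∀ a ∈ D, ∀ E, Q (insert a E) ↔ Q E) :
    prob M p (fun E => D ⊆ E ∧ Q E) = p ^ D.card * prob M p Q := by
  induction M using Finset.induction_on generalizing D Q with
  | empty => simp [subset_empty.1 hD, prob, expect_empty]
  | insert a M ha ih =>
    rw [prob_insert ha, prob_insert ha]
    by_cases haD : a ∈ D
    · have hout : prob M p (fun E => D ⊆ E ∧ Q E) = 0 := by
        rw [prob_congr (Q := fun _ => False) fun E hE => iff_false_intro fun h => ha (hE (h.1 haD))]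
        simp only [prob, if_false, expect_const]
      have hins : prob M p (fun E => D ⊆ insert a E ∧ Q (insert a E))
          = prob M p (fun E => D.erase a ⊆ E ∧ Q E) :=
        prob_congr fun E _ => by rw [subset_insert_iff, hQ a haD]
      have hQa : prob M p (fun E => Q (insert a E)) = prob M p Q :=
        prob_congr fun E _ => hQ a haD E
      have hDa : D.erase a ⊆ M := fun b hb => by
        have := hD (mem_of_mem_erase hb)
        rwa [mem_insert, or_iff_right (ne_of_mem_erase hb)] at this
      rw [hout, hins, ih hDa fun b hb => hQ b (mem_of_mem_erase hb), hQa, card_erase_of_mem haD,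
        ← Nat.succ_pred_eq_of_pos (card_pos.2 ⟨a, haD⟩), pow_succ]
      simp only [Nat.pred_eq_sub_one, Nat.succ_sub_one]
      ring
    · have hDM : D ⊆ M := fun b hb => by
        have := hD hb
        rwa [mem_insert, or_iff_right fun h : b = a => haD (h ▸ hb)] at this
      have hins : prob M p (fun E => D ⊆ insert a E ∧ Q (insert a E))
          = prob M p (fun E => D ⊆ E ∧ Q (insert a E)) :=
        prob_congr fun E _ => by rw [subset_insert_iff_of_notMem haD]
      rw [hins, ih hDM fun b hb E => by rw [insert_comm]; exact hQ b hb _, ih hDM hQ]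
      ring

lemma prob_subset {D : Finset α} (hD : D ⊆ M) : prob M p (fun E => D ⊆ E) = p ^ D.card := by
  simpa only [and_true, prob_true, mul_one] using
    prob_subset_and (p := p) hD (Q := fun _ => True) fun _ _ _ => Iff.rfl

/-- The conditioning step in the proof of Janson's inequality. -/
lemma mul_prob_le_prob_and_subset (hp₀ : 0 ≤ p) (hp₁ : p ≤ 1) {ι : Type*} (I : Finset ι)
    (D : ι → Finset α) (hD : ∀ j ∈ I, D j ⊆ M) {D₀ : Finset α} (hD₀ : D₀ ⊆ M) :
    (p ^ D₀.card - ∑ j ∈ I with ¬ Disjoint D₀ (D j), p ^ (D₀ ∪ D j).card)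
        * prob M p (fun E => ∀ j ∈ I, ¬ D j ⊆ E)
      ≤ prob M p (fun E => (∀ j ∈ I, ¬ D j ⊆ E) ∧ D₀ ⊆ E) := by
  set Ind := I.filter fun j => Disjoint D₀ (D j)
  set r := p ^ D₀.card - ∑ j ∈ I with ¬ Disjoint D₀ (D j), p ^ (D₀ ∪ D j).card
  have hindep : prob M p (fun E => D₀ ⊆ E ∧ ∀ j ∈ Ind, ¬ D j ⊆ E)
      = p ^ D₀.card * prob M p (fun E => ∀ j ∈ Ind, ¬ D j ⊆ E) :=
    prob_subset_and hD₀ fun a ha E => forall₂_congr fun j hj => by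
      rw [subset_insert_iff_of_notMem (disjoint_left.1 (mem_filter.1 hj).2 ha)]
  have hunion : prob M p (fun E => D₀ ⊆ E ∧ ∀ j ∈ Ind, ¬ D j ⊆ E)
      ≤ prob M p (fun E => (∀ j ∈ I, ¬ D j ⊆ E) ∧ D₀ ⊆ E)
        + ∑ j ∈ I with ¬ Disjoint D₀ (D j),
            prob M p (fun E => D₀ ∪ D j ⊆ E ∧ ∀ l ∈ Ind, ¬ D l ⊆ E) := by
    refine prob_le_prob_add_sum hp₀ hp₁ _ _ fun E _ ⟨h₀, hInd⟩ => ?_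
    by_cases hall : ∀ j ∈ I, ¬ D j ⊆ E
    · exact Or.inl ⟨hall, h₀⟩
    · push Not at hall
      obtain ⟨j, hj, hjE⟩ := hall
      exact Or.inr ⟨j, mem_filter.2 ⟨hj, fun hdisj => hInd j (mem_filter.2 ⟨hj, hdisj⟩) hjE⟩,
        union_subset h₀ hjE, hInd⟩
  have hharris : ∀ j ∈ I.filter fun j => ¬ Disjoint D₀ (D j),
      prob M p (fun E => D₀ ∪ D j ⊆ E ∧ ∀ l ∈ Ind, ¬ D l ⊆ E)
        ≤ p ^ (D₀ ∪ D j).card * prob M p (fun E => ∀ l ∈ Ind, ¬ D l ⊆ E) := fun j hj => by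
    rw [← prob_subset (union_subset hD₀ (hD j (mem_filter.1 hj).1))]
    exact prob_and_le_mul hp₀ hp₁ (fun E F h hE => hE.trans h)
      fun E F h hF l hl hlE => hF l hl (hlE.trans h)
  have hkey : r * prob M p (fun E => ∀ j ∈ Ind, ¬ D j ⊆ E)
      ≤ prob M p (fun E => (∀ j ∈ I, ¬ D j ⊆ E) ∧ D₀ ⊆ E) := by
    have := sum_le_sum hharris
    rw [← sum_mul] at this
    rw [sub_mul]
    linarith
  rcases le_or_gt 0 r with hr | hr
  · refine (mul_le_mul_of_nonneg_left ?_ hr).trans hkey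
    exact prob_mono hp₀ hp₁ fun E _ h j hj => h j (mem_filter.1 hj).1
  · exact (mul_nonpos_of_nonpos_of_nonneg hr.le (prob_nonneg hp₀ hp₁ _)).trans
      (prob_nonneg hp₀ hp₁ _)

/-- Janson's inequality. -/
lemma prob_forall_not_subset_le_exp (hp₀ : 0 ≤ p) (hp₁ : p ≤ 1) {ι : Type*} [DecidableEq ι]
    (I : Finset ι) (D : ι → Finset α) (hD : ∀ i ∈ I, D i ⊆ M) :
    prob M p (fun E => ∀ i ∈ I, ¬ D i ⊆ E)
      ≤ Real.exp (-∑ i ∈ I, p ^ (D i).card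
          + ∑ i ∈ I, ∑ j ∈ I with j ≠ i ∧ ¬ Disjoint (D i) (D j), p ^ (D i ∪ D j).card) := by
  induction I using Finset.induction_on with
  | empty => simp [prob_true]
  | insert i I hi ih =>
    have hDI : ∀ j ∈ I, D j ⊆ M := fun j hj => hD j (mem_insert_of_mem hj)
    set r := p ^ (D i).card - ∑ j ∈ I with ¬ Disjoint (D i) (D j), p ^ (D i ∪ D j).card
    have hsplit : prob M p (fun E => ∀ j ∈ insert i I, ¬ D j ⊆ E)
        = prob M p (fun E => ∀ j ∈ I, ¬ D j ⊆ E)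
          - prob M p (fun E => (∀ j ∈ I, ¬ D j ⊆ E) ∧ D i ⊆ E) := by
      rw [← prob_and_not]
      exact prob_congr fun E _ => by rw [forall_mem_insert, and_comm]
    have hstep := mul_prob_le_prob_and_subset hp₀ hp₁ I D hDI (hD i (mem_insert_self i I))
    have hΔ : ∑ j ∈ I with ¬ Disjoint (D i) (D j), p ^ (D i ∪ D j).card
          + ∑ i' ∈ I, ∑ j ∈ I with j ≠ i' ∧ ¬ Disjoint (D i') (D j), p ^ (D i' ∪ D j).card
        ≤ ∑ i' ∈ insert i I,
            ∑ j ∈ insert i I with j ≠ i' ∧ ¬ Disjoint (D i') (D j), p ^ (D i' ∪ D j).card := by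
      rw [sum_insert hi, filter_insert, if_neg fun h => h.1 rfl]
      refine add_le_add (le_of_eq (sum_congr ?_ fun _ _ => rfl))
        (sum_le_sum fun i' _ => sum_le_sum_of_subset_of_nonneg ?_ fun _ _ _ => pow_nonneg hp₀ _)
      · exact filter_congr fun j hj => by
          simp only [ne_of_mem_of_not_mem hj hi, ne_eq, not_false_eq_true, true_and]
      · exact filter_subset_filter _ (subset_insert i I)
    calc prob M p (fun E => ∀ j ∈ insert i I, ¬ D j ⊆ E)
        ≤ (1 - r) * prob M p (fun E => ∀ j ∈ I, ¬ D j ⊆ E) := by rw [hsplit]; linarith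
      _ ≤ Real.exp (-r) * Real.exp (-∑ i ∈ I, p ^ (D i).card
          + ∑ i ∈ I, ∑ j ∈ I with j ≠ i ∧ ¬ Disjoint (D i) (D j), p ^ (D i ∪ D j).card) :=
        mul_le_mul (by linarith [Real.add_one_le_exp (-r)]) (ih hDI) (prob_nonneg hp₀ hp₁ _)
          (Real.exp_nonneg _)
      _ ≤ _ := by
        rw [← Real.exp_add, sum_insert hi]
        exact Real.exp_le_exp.2 (by linarith)

lemma prod_le_prob_forall_not_subset (hp₀ : 0 ≤ p) (hp₁ : p ≤ 1) {ι : Type*} [DecidableEq ι]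
    (I : Finset ι) (D : ι → Finset α) (hD : ∀ i ∈ I, D i ⊆ M) :
    ∏ i ∈ I, (1 - p ^ (D i).card) ≤ prob M p (fun E => ∀ i ∈ I, ¬ D i ⊆ E) := by
  induction I using Finset.induction_on with
  | empty => simp [prob_true]
  | insert i I hi ih =>
    have hDi : prob M p (fun E => ¬ D i ⊆ E) = 1 - p ^ (D i).card := by
      rw [prob_not, prob_subset (hD i (mem_insert_self i I))]
    rw [prod_insert hi, ← hDi, prob_congr fun E _ => forall_mem_insert _ _ _]
    calc prob M p (fun E => ¬ D i ⊆ E) * ∏ j ∈ I, (1 - p ^ (D j).card)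
        ≤ prob M p (fun E => ¬ D i ⊆ E) * prob M p (fun E => ∀ j ∈ I, ¬ D j ⊆ E) :=
          mul_le_mul_of_nonneg_left (ih fun j hj => hD j (mem_insert_of_mem hj))
            (prob_nonneg hp₀ hp₁ _)
      _ ≤ _ := prob_mul_le_prob_and hp₀ hp₁ (fun E F h hF hE => hF (hE.trans h))
          fun E F h hF j hj hjE => hF j hj (hjE.trans h)

end Probability

end RandomSubset

open RandomSubset

lemma card_union_eq_three {β : Type*} [DecidableEq β] {s t : Finset β} (hs : s.card = 2)
    (ht : t.card = 2) (hst : s ≠ t) (h : ¬ Disjoint s t) : (s ∪ t).card = 3 := by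
  have h₁ : 1 ≤ (s ∩ t).card := card_pos.2 (not_disjoint_iff_nonempty_inter.1 h)
  have h₂ : (s ∩ t).card ≠ 2 := fun h₂ => hst <|
    (eq_of_subset_of_card_le inter_subset_left (by omega)).symm.trans
      (eq_of_subset_of_card_le inter_subset_right (by omega))
  have := card_union_add_card_inter s t
  have := card_le_card (inter_subset_left (s₁ := s) (s₂ := t))
  omega

lemma exp_neg_mul_le_one_sub_pow {x : ℝ} (hx : x ≤ 1 / 2) (N : ℕ) :
    Real.exp (-(N * (x + 2 * x ^ 2))) ≤ (1 - x) ^ N := by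
  have hlog : -(x + 2 * x ^ 2) ≤ Real.log (1 - x) := by
    have h : (1 - x)⁻¹ ≤ 1 + x + 2 * x ^ 2 := by
      rw [inv_eq_one_div, div_le_iff₀ (by linarith)]
      nlinarith [mul_nonneg (sq_nonneg x) (by linarith : (0 : ℝ) ≤ 1 - 2 * x)]
    linarith [Real.one_sub_inv_le_log_of_pos (by linarith : 0 < 1 - x)]
  rw [neg_mul_eq_mul_neg, Real.exp_nat_mul]
  exact pow_le_pow_left₀ (Real.exp_nonneg _)
    ((Real.exp_le_exp.2 hlog).trans_eq (Real.exp_log (by linarith))) N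

noncomputable def cherryError (n k : ℕ) (p : ℝ) : ℝ :=
  16 * (n : ℝ) ^ (k + 1) * p ^ 3 + 4 * (n : ℝ) ^ (k - 1) * p ^ 2 + 4 * (n : ℝ) ^ k * p ^ 4

lemma janson_exponent_le_cherryError {n k : ℕ} {p Nu Nv Au Av : ℝ} (hp₀ : 0 ≤ p)
    (hu : Nu ≤ Au + 2 * n ^ (k - 1)) (hv : Nv ≤ Av + 2 * n ^ (k - 1)) (hAu : Au ≤ Nu)
    (hAv : Av ≤ Nv) (hNu : Nu ≤ n ^ k) (hNv : Nv ≤ n ^ k) :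
    -((Au + Av) * p ^ 2) + (Au + Av) * (8 * n) * p ^ 3
      ≤ cherryError n k p + -((Nu + Nv) * (p ^ 2 + 2 * (p ^ 2) ^ 2)) := by
  have h₂ := mul_le_mul_of_nonneg_right (add_le_add hu hv) (sq_nonneg p)
  have h₃ := mul_le_mul_of_nonneg_right (add_le_add hAu hAv)
    (by positivity : (0 : ℝ) ≤ 8 * n * p ^ 3)
  have h₃' := mul_le_mul_of_nonneg_right (add_le_add hNu hNv)
    (by positivity : (0 : ℝ) ≤ 8 * n * p ^ 3)
  have h₄ := mul_le_mul_of_nonneg_right (add_le_add hNu hNv) (by positivity : (0 : ℝ) ≤ 2 * p ^ 4)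
  rw [cherryError, pow_succ (n : ℝ) k]
  nlinarith

section Cherries

variable {V : Type*} [Fintype V] [DecidableEq V]

/-- Every `1`-offset trail starting at `a` begins with one of these pairs of edges. -/
def cherries (k : ℕ) (a : V) : Finset (Finset V × Finset V) :=
  (powersetCard k univ ×ˢ powersetCard k univ).filter
    fun c => a ∈ c.1 ∧ a ∉ c.2 ∧ (c.1 ∩ c.2).card = k - 1

lemma mem_cherries {k : ℕ} {a : V} {c : Finset V × Finset V} :
    c ∈ cherries k a
      ↔ c.1.card = k ∧ c.2.card = k ∧ a ∈ c.1 ∧ a ∉ c.2 ∧ (c.1 ∩ c.2).card = k - 1 := by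
  simp [cherries, mem_powersetCard, and_assoc]

lemma exists_eq_of_mem_cherries {k : ℕ} {a : V} {c : Finset V × Finset V}
    (hc : c ∈ cherries k a) :
    ∃ S w, S.card = k - 1 ∧ a ∉ S ∧ w ∉ S ∧ c = (insert a S, insert w S) := by
  obtain ⟨h₁, h₂, ha₁, ha₂, h₁₂⟩ := mem_cherries.1 hc
  have hk : 1 ≤ k := h₁ ▸ card_pos.2 ⟨a, ha₁⟩
  set S := c.1.erase a
  have hS : S.card = k - 1 := by rw [card_erase_of_mem ha₁, h₁]
  have hinter : c.1 ∩ c.2 = S :=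
    eq_of_subset_of_card_le (fun x hx => mem_erase.2
      ⟨fun h => ha₂ (h ▸ (mem_inter.1 hx).2), (mem_inter.1 hx).1⟩) (by rw [hS, h₁₂])
  have hS₂ : S ⊆ c.2 := hinter ▸ inter_subset_right
  obtain ⟨w, hw⟩ := card_eq_one.1 (show (c.2 \ S).card = 1 by
    rw [card_sdiff_of_subset hS₂, h₂, hS]; omega)
  have hwS : w ∉ S := (mem_sdiff.1 (hw ▸ mem_singleton_self w)).2
  refine ⟨S, w, hS, notMem_erase a c.1, hwS, Prod.ext (insert_erase ha₁).symm ?_⟩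
  show c.2 = insert w S
  rw [insert_eq, ← hw, sdiff_union_of_subset hS₂]

lemma cherry_mem_cherries_of_isOffsetTrail {k : ℕ} {H : Finset (Finset V)}
    (hH : H ⊆ powersetCard k univ) {u v : V} {m : ℕ} {E : ℕ → Finset V}
    (ht : IsOffsetTrail k H u v m E) : (E 0, E 1) ∈ cherries k u ∧ {E 0, E 1} ⊆ H := by
  obtain ⟨hm, -, hEH, -, -, h₀₁, hu₀, hu₁, -⟩ := ht
  have hE₀ := hEH 0 (by omega)
  have hE₁ := hEH 1 (by omega)
  exact ⟨mem_cherries.2 ⟨(mem_powersetCard.1 (hH hE₀)).2, (mem_powersetCard.1 (hH hE₁)).2,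
    hu₀, hu₁, h₀₁⟩, insert_subset hE₀ (singleton_subset_iff.2 hE₁)⟩

lemma card_cherries_le (k : ℕ) (a : V) :
    (cherries k a).card ≤ (Fintype.card V).choose (k - 1) * Fintype.card V := by
  calc (cherries k a).card
      ≤ ((powersetCard (k - 1) univ ×ˢ univ).image
          fun x : Finset V × V => (insert a x.1, insert x.2 x.1)).card := by
        refine card_le_card fun c hc => ?_
        obtain ⟨S, w, hS, -, -, rfl⟩ := exists_eq_of_mem_cherries hc
        exact mem_image.2 ⟨(S, w), by simp [mem_powersetCard, hS], rfl⟩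
    _ ≤ _ := card_image_le.trans (by simp [card_powersetCard])

/-- Dropping the cherries at `a` that contain `b` makes the edge pairs of the cherries in
`cherriesAvoiding k u v ∪ cherriesAvoiding k v u` pairwise distinct. -/
def cherriesAvoiding (k : ℕ) (a b : V) : Finset (Finset V × Finset V) :=
  (cherries k a).filter fun c => b ∉ c.1 ∧ b ∉ c.2

lemma card_cherries_le_card_cherriesAvoiding_add {k : ℕ} (hk : 2 ≤ k) {a b : V} (hab : a ≠ b) :
    (cherries k a).card ≤ (cherriesAvoiding k a b).card + 2 * Fintype.card V ^ (k - 1) := by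
  set n := Fintype.card V with hn
  have hbad : ((cherries k a).filter fun c => ¬ (b ∉ c.1 ∧ b ∉ c.2)).card ≤ 2 * n ^ (k - 1) := by
    calc ((cherries k a).filter fun c => ¬ (b ∉ c.1 ∧ b ∉ c.2)).card
        ≤ (((powersetCard (k - 2) univ ×ˢ univ).image fun x : Finset V × V =>
              (insert a (insert b x.1), insert x.2 (insert b x.1)))
            ∪ (powersetCard (k - 1) univ).image fun S => (insert a S, insert b S)).card := by
          refine card_le_card fun c hc => ?_
          obtain ⟨hc, hbc⟩ := mem_filter.1 hc
          obtain ⟨S, w, hS, -, -, rfl⟩ := exists_eq_of_mem_cherries hc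
          have : b ∈ S ∨ b = w := by
            simp only [not_and_or, not_not, mem_insert] at hbc
            rcases hbc with (h | h) | (h | h)
            exacts [absurd h.symm hab, Or.inl h, Or.inr h, Or.inl h]
          rcases this with hb | rfl
          · refine mem_union_left _ (mem_image.2 ⟨(S.erase b, w), ?_, by rw [insert_erase hb]⟩)
            refine mem_product.2 ⟨mem_powersetCard.2 ⟨subset_univ _, ?_⟩, mem_univ _⟩
            rw [card_erase_of_mem hb, hS]
            omega
          · exact mem_union_right _ (mem_image.2 ⟨S, by simp [mem_powersetCard, hS], rfl⟩)
      _ ≤ n.choose (k - 2) * n + n.choose (k - 1) :=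
          (card_union_le _ _).trans (add_le_add
            (card_image_le.trans (by simp [card_powersetCard, ← hn]))
            (card_image_le.trans (by simp [card_powersetCard, ← hn])))
      _ ≤ n ^ (k - 2) * n + n ^ (k - 1) :=
          add_le_add (Nat.mul_le_mul_right _ (Nat.choose_le_pow _ _)) (Nat.choose_le_pow _ _)
      _ = 2 * n ^ (k - 1) := by
          rw [← pow_succ, show k - 2 + 1 = k - 1 by omega]
          ring
  have := card_filter_add_card_filter_not (s := cherries k a) (p := fun c => b ∉ c.1 ∧ b ∉ c.2)
  rw [cherriesAvoiding]
  omega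

lemma disjoint_cherriesAvoiding (k : ℕ) (u v : V) :
    Disjoint (cherriesAvoiding k u v) (cherriesAvoiding k v u) :=
  disjoint_left.2 fun _ hc hc' =>
    (mem_filter.1 hc').2.1 (mem_cherries.1 (mem_filter.1 hc).1).2.2.1

lemma card_pair_of_mem_cherries {k : ℕ} {a : V} {c : Finset V × Finset V}
    (hc : c ∈ cherries k a) : ({c.1, c.2} : Finset (Finset V)).card = 2 := by
  obtain ⟨-, -, ha₁, ha₂, -⟩ := mem_cherries.1 hc
  exact card_pair fun h => ha₂ (h ▸ ha₁)

lemma eq_of_pair_eq_of_mem_cherriesAvoiding {k : ℕ} {a b a' : V} {c c' : Finset V × Finset V}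
    (hc : c ∈ cherriesAvoiding k a b) (ha' : a' = a ∨ a' = b) (hc' : c' ∈ cherries k a')
    (h : ({c.1, c.2} : Finset (Finset V)) = {c'.1, c'.2}) : c = c' := by
  obtain ⟨-, -, ha'₁, ha'₂, -⟩ := mem_cherries.1 hc'
  have hc₂ : a' ∉ c.2 := by
    obtain ⟨hc, -, hb₂⟩ := mem_filter.1 hc
    rcases ha' with rfl | rfl
    exacts [(mem_cherries.1 hc).2.2.2.1, hb₂]
  have h₁ : c'.1 ∈ ({c.1, c.2} : Finset (Finset V)) := h ▸ mem_insert_self _ _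
  have h₂ : c'.2 ∈ ({c.1, c.2} : Finset (Finset V)) :=
    h ▸ mem_insert_of_mem (mem_singleton_self _)
  simp only [mem_insert, mem_singleton] at h₁ h₂
  have e₁ : c'.1 = c.1 := h₁.resolve_right fun h => hc₂ (h ▸ ha'₁)
  exact Prod.ext e₁.symm (h₂.resolve_left fun h => ha'₂ (h ▸ e₁ ▸ ha'₁)).symm

lemma injOn_pair_cherriesAvoiding (k : ℕ) (u v : V) :
    Set.InjOn (fun c : Finset V × Finset V => ({c.1, c.2} : Finset (Finset V)))
      ↑(cherriesAvoiding k u v ∪ cherriesAvoiding k v u) := by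
  intro c hc c' hc' h
  simp only [coe_union, Set.mem_union, mem_coe] at hc hc'
  have hc'' : ∃ a', (a' = u ∨ a' = v) ∧ c' ∈ cherries k a' := by
    rcases hc' with hc' | hc'
    exacts [⟨u, Or.inl rfl, (mem_filter.1 hc').1⟩, ⟨v, Or.inr rfl, (mem_filter.1 hc').1⟩]
  obtain ⟨a', ha', hc'⟩ := hc''
  rcases hc with hc | hc
  · exact eq_of_pair_eq_of_mem_cherriesAvoiding hc ha' hc' h
  · exact eq_of_pair_eq_of_mem_cherriesAvoiding hc ha'.symm hc' h

lemma card_filter_cherries_le (k : ℕ) (a : V) (g : Finset V) :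
    ((cherries k a).filter fun c => g = c.1 ∨ g = c.2).card ≤ 2 * Fintype.card V := by
  calc ((cherries k a).filter fun c => g = c.1 ∨ g = c.2).card
      ≤ (univ.biUnion fun w =>
          ({(g, insert w (g.erase a)), (insert a (g.erase w), g)} : Finset _)).card := by
        refine card_le_card fun c hc => ?_
        obtain ⟨hc, hg⟩ := mem_filter.1 hc
        obtain ⟨S, w, -, haS, hwS, rfl⟩ := exists_eq_of_mem_cherries hc
        simp only [mem_biUnion, mem_univ, true_and, mem_insert, mem_singleton]
        refine ⟨w, ?_⟩
        rcases hg with rfl | rfl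
        · simp [erase_insert haS]
        · simp [erase_insert hwS]
    _ ≤ ∑ _w : V, 2 := card_biUnion_le.trans (sum_le_sum fun _ _ => card_le_two)
    _ = 2 * Fintype.card V := by simp [mul_comm]

lemma card_filter_not_disjoint_le (k : ℕ) (u v : V) (i : Finset V × Finset V) :
    ((cherriesAvoiding k u v ∪ cherriesAvoiding k v u).filter
        fun j => ¬ Disjoint ({i.1, i.2} : Finset (Finset V)) {j.1, j.2}).card
      ≤ 8 * Fintype.card V := by
  calc _ ≤ (({i.1, i.2} : Finset (Finset V)).biUnion fun g => ({u, v} : Finset V).biUnion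
          fun a => (cherries k a).filter fun c => g = c.1 ∨ g = c.2).card := by
        refine card_le_card fun j hj => ?_
        obtain ⟨hj, hij⟩ := mem_filter.1 hj
        obtain ⟨g, hgi, hgj⟩ := not_disjoint_iff.1 hij
        simp only [mem_insert, mem_singleton] at hgj
        simp only [mem_biUnion, mem_insert, mem_singleton, mem_filter]
        refine ⟨g, by simpa using hgi, ?_⟩
        rcases mem_union.1 hj with hj | hj
        exacts [⟨u, Or.inl rfl, (mem_filter.1 hj).1, hgj⟩,
          ⟨v, Or.inr rfl, (mem_filter.1 hj).1, hgj⟩]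
    _ ≤ ∑ g ∈ ({i.1, i.2} : Finset (Finset V)), ∑ a ∈ ({u, v} : Finset V), 2 * Fintype.card V :=
        card_biUnion_le.trans (sum_le_sum fun g _ => card_biUnion_le.trans
          (sum_le_sum fun a _ => card_filter_cherries_le k a g))
    _ ≤ 2 * (2 * (2 * Fintype.card V)) := by
        simp only [sum_const, smul_eq_mul]
        gcongr <;> exact card_le_two
    _ = 8 * Fintype.card V := by ring

lemma card_cherries_le_pow {k : ℕ} (hk : 1 ≤ k) (a : V) :
    (cherries k a).card ≤ Fintype.card V ^ k :=
  (card_cherries_le k a).trans <| (Nat.mul_le_mul_right _ (Nat.choose_le_pow _ _)).trans_eq <| by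
    rw [← pow_succ, Nat.sub_add_cancel hk]

def Cherryless (k : ℕ) (a : V) (H : Finset (Finset V)) : Prop :=
  ∀ c ∈ cherries k a, ¬ ({c.1, c.2} : Finset (Finset V)) ⊆ H

lemma pair_subset_powersetCard {k : ℕ} {a : V} {c : Finset V × Finset V}
    (hc : c ∈ cherries k a) : ({c.1, c.2} : Finset (Finset V)) ⊆ powersetCard k univ := by
  obtain ⟨h₁, h₂, -⟩ := mem_cherries.1 hc
  simp [insert_subset_iff, mem_powersetCard, h₁, h₂]

variable {p : ℝ}

lemma one_sub_sq_pow_le_prob_cherryless (hp₀ : 0 ≤ p) (hp₁ : p ≤ 1) (k : ℕ) (a : V) :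
    (1 - p ^ 2) ^ (cherries k a).card ≤ prob (powersetCard k univ) p (Cherryless k a) := by
  have := prod_le_prob_forall_not_subset hp₀ hp₁ (cherries k a) _ fun _ => pair_subset_powersetCard
  rwa [prod_congr rfl fun c hc => by rw [card_pair_of_mem_cherries hc], prod_const] at this

lemma prob_cherryless_and_cherryless_le_exp (hp₀ : 0 ≤ p) (hp₁ : p ≤ 1) (k : ℕ) (u v : V) :
    prob (powersetCard k univ) p (fun H => Cherryless k u H ∧ Cherryless k v H)
      ≤ Real.exp (-((cherriesAvoiding k u v ∪ cherriesAvoiding k v u).card * p ^ 2)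
          + (cherriesAvoiding k u v ∪ cherriesAvoiding k v u).card
            * (8 * Fintype.card V) * p ^ 3) := by
  set I := cherriesAvoiding k u v ∪ cherriesAvoiding k v u
  have hI : ∀ c ∈ I, c ∈ cherries k u ∨ c ∈ cherries k v := fun c hc =>
    (mem_union.1 hc).imp (fun h => (mem_filter.1 h).1) fun h => (mem_filter.1 h).1
  have hcard : ∀ c ∈ I, ({c.1, c.2} : Finset (Finset V)).card = 2 := fun c hc =>
    (hI c hc).elim card_pair_of_mem_cherries card_pair_of_mem_cherries
  have hΔ : ∀ i ∈ I, ∑ j ∈ I with j ≠ i ∧ ¬ Disjoint ({i.1, i.2} : Finset (Finset V)) {j.1, j.2},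
      p ^ ({i.1, i.2} ∪ {j.1, j.2} : Finset (Finset V)).card ≤ 8 * Fintype.card V * p ^ 3 := by
    intro i hi
    rw [sum_congr rfl fun j hj => ?_, sum_const, nsmul_eq_mul]
    · refine mul_le_mul_of_nonneg_right ?_ (by positivity)
      exact_mod_cast (card_le_card (monotone_filter_right I fun _ _ (h : _ ∧ _) => h.2)).trans
        (card_filter_not_disjoint_le k u v i)
    · obtain ⟨hj, hji, hdisj⟩ := mem_filter.1 hj
      rw [card_union_eq_three (hcard i hi) (hcard j hj)
        (fun h => hji (injOn_pair_cherriesAvoiding k u v hi hj h).symm) hdisj]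
  refine (prob_mono hp₀ hp₁ fun H _ h c hc => (hI c hc).elim (h.1 c) (h.2 c)).trans <|
    (prob_forall_not_subset_le_exp hp₀ hp₁ I _ fun c hc =>
      (hI c hc).elim pair_subset_powersetCard pair_subset_powersetCard).trans <|
    Real.exp_le_exp.2 ?_
  rw [sum_congr rfl fun c hc => by rw [hcard c hc], sum_const, nsmul_eq_mul]
  have := sum_le_sum hΔ
  rw [sum_const, nsmul_eq_mul] at this
  linarith

lemma prob_cherryless_and_cherryless_le {k : ℕ} (hk : 2 ≤ k) (hp₀ : 0 ≤ p)
    (hp : p ^ 2 ≤ 1 / 2) {u v : V} (huv : u ≠ v) :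
    prob (powersetCard k univ) p (fun H => Cherryless k u H ∧ Cherryless k v H)
      ≤ Real.exp (cherryError (Fintype.card V) k p)
        * (prob (powersetCard k univ) p (Cherryless k u)
          * prob (powersetCard k univ) p (Cherryless k v)) := by
  have hp₁ : p ≤ 1 := by nlinarith
  have hN : (cherriesAvoiding k u v ∪ cherriesAvoiding k v u).card
      = (cherriesAvoiding k u v).card + (cherriesAvoiding k v u).card :=
    card_union_of_disjoint (disjoint_cherriesAvoiding k u v)
  have hu := card_cherries_le_card_cherriesAvoiding_add hk huv
  have hv := card_cherries_le_card_cherriesAvoiding_add hk huv.symm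
  have hAu : (cherriesAvoiding k u v).card ≤ (cherries k u).card := card_filter_le _ _
  have hAv : (cherriesAvoiding k v u).card ≤ (cherries k v).card := card_filter_le _ _
  have hNu := card_cherries_le_pow (by omega : 1 ≤ k) u
  have hNv := card_cherries_le_pow (by omega : 1 ≤ k) v
  have hlow : Real.exp (-(((cherries k u).card + (cherries k v).card : ℕ)
        * (p ^ 2 + 2 * (p ^ 2) ^ 2)))
      ≤ prob (powersetCard k univ) p (Cherryless k u)
        * prob (powersetCard k univ) p (Cherryless k v) := by
    rw [Nat.cast_add, add_mul, neg_add, Real.exp_add]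
    exact mul_le_mul
      ((exp_neg_mul_le_one_sub_pow hp _).trans
        (one_sub_sq_pow_le_prob_cherryless hp₀ hp₁ k u))
      ((exp_neg_mul_le_one_sub_pow hp _).trans
        (one_sub_sq_pow_le_prob_cherryless hp₀ hp₁ k v))
      (Real.exp_nonneg _) (prob_nonneg hp₀ hp₁ _)
  refine (prob_cherryless_and_cherryless_le_exp hp₀ hp₁ k u v).trans ?_
  refine le_trans ?_ (mul_le_mul_of_nonneg_left hlow (Real.exp_nonneg _))
  rw [← Real.exp_add, Real.exp_le_exp, hN]
  push_cast
  exact janson_exponent_le_cherryError hp₀ (by exact_mod_cast hu) (by exact_mod_cast hv)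
    (by exact_mod_cast hAu) (by exact_mod_cast hAv) (by exact_mod_cast hNu)
    (by exact_mod_cast hNv)

end Cherries

lemma prH_eq_prob (n k : ℕ) (p : ℝ) (P : Finset (Finset (Fin n)) → Prop) :
    prH n k p P = prob (kSets n k) p P :=
  sum_congr rfl fun E _ => by rw [mul_ite, mul_one, mul_zero]

lemma not_TConnected_of_cherryless {n k : ℕ} (hn : 2 ≤ n) {H : Finset (Finset (Fin n))}
    (hH : H ⊆ kSets n k) {u : Fin n} (hu : Cherryless k u H) : ¬ TConnected k n H := fun hT => by
  have := Fin.nontrivial_iff_two_le.2 hn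
  obtain ⟨v, hv⟩ := exists_ne u
  obtain ⟨m, E, ht⟩ := hT u v hv.symm
  obtain ⟨hc, hcH⟩ := cherry_mem_cherries_of_isOffsetTrail hH ht
  exact hu _ hc hcH

lemma one_sub_le_prH_not_TConnected {n k : ℕ} (hn : 2 ≤ n) (hk : 2 ≤ k) {p : ℝ} (hp₀ : 0 ≤ p)
    (hp : p ^ 2 ≤ 1 / 2) :
    1 - (1 / (n * (1 - p ^ 2) ^ (n.choose (k - 1) * n)) + (Real.exp (cherryError n k p) - 1))
      ≤ prH n k p fun H => ¬ TConnected k n H := by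
  have hp₁ : p ≤ 1 := by nlinarith
  have hq : 0 < 1 - p ^ 2 := by linarith
  have hcherryless := prob_forall_not_le (M := kSets n k) hp₀ hp₁ ⟨⟨0, by omega⟩, mem_univ _⟩
    (pow_pos hq _) (fun u _ => (pow_le_pow_of_le_one hq.le (by nlinarith)
      (by simpa using card_cherries_le k u)).trans (one_sub_sq_pow_le_prob_cherryless hp₀ hp₁ k u))
    (Real.exp_nonneg _) fun u _ v _ huv => prob_cherryless_and_cherryless_le hk hp₀ hp huv
  rw [card_univ, Fintype.card_fin] at hcherryless
  rw [prH_eq_prob]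
  calc _ ≤ 1 - prob (kSets n k) p (fun H => ∀ u ∈ univ, ¬ Cherryless k u H) := by linarith
    _ = prob (kSets n k) p (fun H => ¬ ∀ u ∈ univ, ¬ Cherryless k u H) := (prob_not _).symm
    _ ≤ _ := prob_mono hp₀ hp₁ fun H hH h => by
        push Not at h
        obtain ⟨u, -, hu⟩ := h
        exact not_TConnected_of_cherryless hn hH hu

lemma one_div_mul_one_sub_sq_pow_le {x ε q : ℝ} (hx : 1 ≤ x) (hε₀ : 0 < ε) (hε : ε ≤ 1 / 2)
    (hq : q ^ 2 ≤ ε / 2) {N : ℕ} (hN : N * q ^ 2 ≤ (1 - ε) ^ 2 * Real.log x) :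
    1 / (x * (1 - q ^ 2) ^ N) ≤ x ^ (-ε) := by
  have hL : 0 ≤ Real.log x := Real.log_nonneg hx
  have hexp : N * (q ^ 2 + 2 * (q ^ 2) ^ 2) ≤ (1 - ε) * Real.log x :=
    calc N * (q ^ 2 + 2 * (q ^ 2) ^ 2) = N * q ^ 2 * (1 + 2 * q ^ 2) := by ring
      _ ≤ (1 - ε) ^ 2 * Real.log x * (1 + ε) :=
          mul_le_mul hN (by linarith) (by positivity) (by positivity)
      _ = (1 - ε) ^ 2 * (1 + ε) * Real.log x := by ring
      _ ≤ (1 - ε) * Real.log x :=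
          mul_le_mul_of_nonneg_right (by nlinarith [mul_pos hε₀ hε₀]) hL
  have hbound : Real.exp (ε * Real.log x) ≤ x * (1 - q ^ 2) ^ N :=
    calc Real.exp (ε * Real.log x) = x * Real.exp (-((1 - ε) * Real.log x)) := by
          rw [← Real.exp_log (by linarith : 0 < x), ← Real.exp_add, Real.log_exp]
          ring_nf
      _ ≤ x * (1 - q ^ 2) ^ N := by
          gcongr
          exact (Real.exp_le_exp.2 (neg_le_neg hexp)).trans
            (exp_neg_mul_le_one_sub_pow (by linarith) N)
  rw [Real.rpow_neg (by linarith), Real.rpow_def_of_pos (by linarith), mul_comm (Real.log x),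
    one_div]
  exact inv_anti₀ (Real.exp_pos _) hbound

lemma cherryError_le {n k : ℕ} (hn : 1 ≤ n) (hk : 3 ≤ k) {q t : ℝ} (hq : 0 ≤ q)
    (ht : (n : ℝ) ^ k * q ^ 2 ≤ t) :
    cherryError n k q ≤ 16 * √(t ^ 3 / n) + 4 * (t / n) + 4 * (t ^ 2 / n) := by
  have hn₁ : (1 : ℝ) ≤ n := by exact_mod_cast hn
  have hn₀ : (0 : ℝ) < n := by linarith
  have ht₀ : 0 ≤ t := le_trans (by positivity) ht
  have h₃ : (n : ℝ) ^ (k + 1) * q ^ 3 ≤ √(t ^ 3 / n) := by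
    rw [Real.le_sqrt (by positivity) (by positivity), le_div_iff₀ hn₀]
    calc ((n : ℝ) ^ (k + 1) * q ^ 3) ^ 2 * n = (n : ℝ) ^ (2 * k + 3) * q ^ 6 := by ring
      _ ≤ (n : ℝ) ^ (3 * k) * q ^ 6 :=
          mul_le_mul_of_nonneg_right (pow_le_pow_right₀ hn₁ (by omega)) (by positivity)
      _ = ((n : ℝ) ^ k * q ^ 2) ^ 3 := by ring
      _ ≤ t ^ 3 := by gcongr
  have h₂ : (n : ℝ) ^ (k - 1) * q ^ 2 ≤ t / n := by
    rw [le_div_iff₀ hn₀, mul_right_comm, ← pow_succ, Nat.sub_add_cancel (by omega)]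
    exact ht
  have h₄ : (n : ℝ) ^ k * q ^ 4 ≤ t ^ 2 / n := by
    rw [le_div_iff₀ hn₀]
    calc (n : ℝ) ^ k * q ^ 4 * n = (n : ℝ) ^ (k + 1) * q ^ 4 := by ring
      _ ≤ (n : ℝ) ^ (2 * k) * q ^ 4 :=
          mul_le_mul_of_nonneg_right (pow_le_pow_right₀ hn₁ (by omega)) (by positivity)
      _ = ((n : ℝ) ^ k * q ^ 2) ^ 2 := by ring
      _ ≤ t ^ 2 := by gcongr
  rw [cherryError]
  linarith

lemma tendsto_mul_log_pow_div (c : ℝ) (m : ℕ) :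
    Tendsto (fun n : ℕ => (c * Real.log n) ^ m / n) atTop (nhds 0) := by
  have h := ((Real.tendsto_pow_log_div_mul_add_atTop 1 0 m one_ne_zero).const_mul (c ^ m)).comp
    tendsto_natCast_atTop_atTop
  simp only [one_mul, add_zero, mul_zero] at h
  refine h.congr fun n => ?_
  simp only [Function.comp_apply, mul_pow, mul_div_assoc]

lemma tendsto_cherryError {k : ℕ} (hk : 3 ≤ k) {c : ℝ} {q : ℕ → ℝ} (hq₀ : ∀ n, 0 ≤ q n)
    (hq : ∀ n : ℕ, 1 ≤ n → (n : ℝ) ^ k * q n ^ 2 ≤ c * Real.log n) :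
    Tendsto (fun n => cherryError n k (q n)) atTop (nhds 0) := by
  have hB : Tendsto (fun n : ℕ => 16 * √((c * Real.log n) ^ 3 / n)
      + 4 * ((c * Real.log n) ^ 1 / n) + 4 * ((c * Real.log n) ^ 2 / n)) atTop (nhds 0) := by
    have := (((tendsto_mul_log_pow_div c 3).sqrt.const_mul 16).add
      ((tendsto_mul_log_pow_div c 1).const_mul 4)).add ((tendsto_mul_log_pow_div c 2).const_mul 4)
    simpa using this
  refine tendsto_of_tendsto_of_tendsto_of_le_of_le' tendsto_const_nhds hB
    (Eventually.of_forall fun n => by unfold cherryError; have := hq₀ n; positivity) ?_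
  filter_upwards [eventually_ge_atTop 1] with n hn
  simpa only [pow_one] using cherryError_le hn hk (hq₀ n) (hq n hn)

lemma choose_mul_mul_factorial_le (n : ℕ) {k : ℕ} (hk : 1 ≤ k) :
    ((n.choose (k - 1) * n : ℕ) : ℝ) * (k - 1).factorial ≤ (n : ℝ) ^ k := by
  have h := Nat.choose_le_pow_div (α := ℝ) (k - 1) n
  rw [le_div_iff₀ (by positivity)] at h
  calc ((n.choose (k - 1) * n : ℕ) : ℝ) * (k - 1).factorial
      = n.choose (k - 1) * (k - 1).factorial * n := by push_cast; ring
    _ ≤ (n : ℝ) ^ (k - 1) * n := by gcongr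
    _ = (n : ℝ) ^ k := by rw [← pow_succ, Nat.sub_add_cancel hk]

lemma eventually_sq_le {k : ℕ} (hk : 1 ≤ k) {c δ : ℝ} (hδ : 0 < δ) {q : ℕ → ℝ}
    (hq : ∀ n : ℕ, 1 ≤ n → (n : ℝ) ^ k * q n ^ 2 ≤ c * Real.log n) :
    ∀ᶠ n in atTop, q n ^ 2 ≤ δ := by
  filter_upwards [eventually_ge_atTop 1,
    (tendsto_mul_log_pow_div c 1).eventually (ge_mem_nhds hδ)] with n hn hsmall
  have hn₁ : (1 : ℝ) ≤ n := by exact_mod_cast hn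
  have : (n : ℝ) * q n ^ 2 ≤ (n : ℝ) ^ k * q n ^ 2 :=
    mul_le_mul_of_nonneg_right (le_self_pow₀ hn₁ (by omega)) (sq_nonneg _)
  have : q n ^ 2 ≤ (c * Real.log n) ^ 1 / n := by
    rw [pow_one, le_div_iff₀ (by linarith)]
    linarith [hq n hn]
  linarith

lemma tendsto_prH_not_TConnected {k : ℕ} (hk : 3 ≤ k) {ε : ℝ} (hε₀ : 0 < ε) (hε : ε ≤ 1 / 2)
    {q : ℕ → ℝ} (hq₀ : ∀ n, 0 ≤ q n)
    (hq : ∀ n : ℕ, 1 ≤ n →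
      (n : ℝ) ^ k * q n ^ 2 ≤ (1 - ε) ^ 2 * ((k - 1).factorial * Real.log n)) :
    Tendsto (fun n => prH n k (q n) fun H => ¬ TConnected k n H) atTop (nhds 1) := by
  set c : ℝ := ((k - 1).factorial : ℝ)
  have hc : 0 < c := by positivity
  have hq' : ∀ n : ℕ, 1 ≤ n → (n : ℝ) ^ k * q n ^ 2 ≤ c * Real.log n := fun n hn =>
    (hq n hn).trans (mul_le_of_le_one_left (by positivity) (by nlinarith))
  have hq₂ := eventually_sq_le (by omega) (by linarith : 0 < ε / 2) hq'
  have hlow : ∀ᶠ n : ℕ in atTop,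
      1 - ((n : ℝ) ^ (-ε) + (Real.exp (cherryError n k (q n)) - 1))
        ≤ prH n k (q n) fun H => ¬ TConnected k n H := by
    filter_upwards [eventually_ge_atTop 2, hq₂] with n hn hqn
    have hN : ((n.choose (k - 1) * n : ℕ) : ℝ) * q n ^ 2 ≤ (1 - ε) ^ 2 * Real.log n := by
      rw [← mul_le_mul_iff_of_pos_right hc]
      calc ((n.choose (k - 1) * n : ℕ) : ℝ) * q n ^ 2 * c
          = ((n.choose (k - 1) * n : ℕ) : ℝ) * c * q n ^ 2 := by ring
        _ ≤ (n : ℝ) ^ k * q n ^ 2 :=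
          mul_le_mul_of_nonneg_right (choose_mul_mul_factorial_le n (by omega)) (sq_nonneg _)
        _ ≤ (1 - ε) ^ 2 * Real.log n * c := by linarith [hq n (by omega)]
    have := one_div_mul_one_sub_sq_pow_le (by exact_mod_cast (by omega : 1 ≤ n)) hε₀ hε hqn hN
    refine le_trans ?_ (one_sub_le_prH_not_TConnected hn (by omega) (hq₀ n) (by linarith))
    linarith
  have hup : ∀ᶠ n : ℕ in atTop, prH n k (q n) (fun H => ¬ TConnected k n H) ≤ 1 := by
    filter_upwards [hq₂] with n hqn
    rw [prH_eq_prob]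
    exact prob_le_one (hq₀ n) (by nlinarith [hq₀ n]) _
  have hlim : Tendsto (fun n : ℕ => 1 - ((n : ℝ) ^ (-ε) + (Real.exp (cherryError n k (q n)) - 1)))
      atTop (nhds 1) := by
    have h₁ := (tendsto_rpow_neg_atTop hε₀).comp tendsto_natCast_atTop_atTop
    have h₂ := (Real.continuous_exp.tendsto 0).comp (tendsto_cherryError hk hq₀ hq')
    simpa using tendsto_const_nhds.sub (h₁.add (h₂.sub_const 1))
  exact tendsto_of_tendsto_of_tendsto_of_le_of_le' hlim tendsto_const_nhds hlow hup

lemma mul_sq_le_of_le_mul_sqrt {p a x y : ℝ} (hp : 0 ≤ p) (hx : 0 ≤ x) (hy : 0 < y)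
    (h : p ≤ a * √(x / y)) : y * p ^ 2 ≤ a ^ 2 * x := by
  have := pow_le_pow_left₀ hp h 2
  rw [mul_pow, Real.sq_sqrt (div_nonneg hx hy.le)] at this
  calc y * p ^ 2 ≤ y * (a ^ 2 * (x / y)) := mul_le_mul_of_nonneg_left this hy.le
    _ = a ^ 2 * x := by field_simp

/-- Let `k ≥ 3` and `ε > 0` be fixed. If `0 ≤ p ≤ (1-ε)·√((k-1)!·log n / n^k)`, then
a.a.s. `H_{n,p}^{(k)}` is not 𝒯-connected. -/
theorem TConnected_below_threshold (k : ℕ) (hk : 3 ≤ k) (ε : ℝ) (hε : 0 < ε)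
    (p : ℕ → ℝ) (hp0 : ∀ n : ℕ, 0 ≤ p n)
    (hp : ∀ n : ℕ,
      p n ≤ (1 - ε) * Real.sqrt (((k - 1).factorial : ℝ) * Real.log n / (n : ℝ) ^ k)) :
    Tendsto (fun n : ℕ => prH n k (p n) fun E => ¬ TConnected k n E)
      atTop (nhds 1) := by
  refine tendsto_prH_not_TConnected hk (lt_min hε one_half_pos) (min_le_right ε (1 / 2)) hp0
    fun n hn => ?_
  have hL : 0 ≤ ((k - 1).factorial : ℝ) * Real.log n :=
    mul_nonneg (by positivity) (Real.log_nonneg (by exact_mod_cast hn))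
  have hpn : p n ≤ (1 - min ε (1 / 2)) * √(((k - 1).factorial : ℝ) * Real.log n / (n : ℝ) ^ k) :=
    (hp n).trans (mul_le_mul_of_nonneg_right (by linarith [min_le_left ε (1 / 2)])
      (Real.sqrt_nonneg _))
  exact mul_sq_le_of_le_mul_sqrt (hp0 n) hL (by positivity) hpn
end

section
/- Let k ≥ 3 be an integer, ε > 0 fixed, and p = (1+ε)·√((k−1)! · log n / n^k). Then, uniformly over all sets S ⊆ [n] with 1 ≤ |S| = s ≤ n/2, the probability that H_{n,p}^{(k)} contains no 1-offset trail of exactly 2 edges with one endpoint in S and the other endpoint in [n] \ S is at most exp(−(1+o(1))·(1+ε)²·s·((n−s)/n)·log n). -/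
open Finset Filter
open scoped Classical

/-- A `1`-offset trail of exactly `2` edges in `E` with one endpoint in `S` and the
other endpoint outside `S`. -/
def HasCrossingTrail (n k : ℕ) (S : Finset (Fin n)) (E : Finset (Finset (Fin n))) :
    Prop :=
  ∃ E1 ∈ E, ∃ E2 ∈ E, E1 ≠ E2 ∧ (E1 ∩ E2).card = k - 1 ∧
    ∃ u v : Fin n, E1 \ E2 = {u} ∧ E2 \ E1 = {v} ∧
      ((u ∈ S ∧ v ∉ S) ∨ (u ∉ S ∧ v ∈ S))

/-!
For `u ∈ S`, `v ∉ S` and a `(k - 1)`-set `W` avoiding both, the edges `W ∪ {u}` and `W ∪ {v}`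
form a crossing trail. There are `s (n - s) C(n - 2, k - 1)` such pairs of edges, each present
with probability `p²`, so the expected number of them is
`μ = (1 + o(1)) (1 + ε)² s (n - s) / n · log n`. Two distinct pairs sharing an edge span three
edges, and a pair shares an edge with at most `4 k n` others, so the correlation term of Janson's
inequality is at most `4 k n p · μ = o(μ)`, as `n p → 0` for `k ≥ 3`. Hence the probability of no
crossing trail is at most `exp (-μ + o(μ))`. Janson's inequality itself follows from Harris'
inequality, an instance of the four functions theorem.
-/

theorem one_sub_sum_le_prod_one_sub {τ R : Type*} [CommRing R] [PartialOrder R]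
    [IsOrderedRing R] {J : Finset τ} {x : τ → R} (h₀ : ∀ j ∈ J, 0 ≤ x j)
    (h₁ : ∀ j ∈ J, x j ≤ 1) : 1 - ∑ j ∈ J, x j ≤ ∏ j ∈ J, (1 - x j) := by
  classical
  induction J using Finset.induction_on with
  | empty => simp
  | insert a J ha ih =>
    rw [sum_insert ha, prod_insert ha]
    have ha₀ := h₀ a (mem_insert_self a J)
    have ha₁ := h₁ a (mem_insert_self a J)
    have ih' := ih (fun j hj => h₀ j (mem_insert_of_mem hj))
      (fun j hj => h₁ j (mem_insert_of_mem hj))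
    have hs : 0 ≤ ∑ j ∈ J, x j := sum_nonneg fun j hj => h₀ j (mem_insert_of_mem hj)
    calc 1 - (x a + ∑ j ∈ J, x j)
        = (1 - x a) * (1 - ∑ j ∈ J, x j) - x a * ∑ j ∈ J, x j := by ring
      _ ≤ (1 - x a) * (1 - ∑ j ∈ J, x j) := sub_le_self _ (mul_nonneg ha₀ hs)
      _ ≤ (1 - x a) * ∏ j ∈ J, (1 - x j) := mul_le_mul_of_nonneg_left ih' (sub_nonneg.2 ha₁)

theorem insert_inter_insert_of_ne {α : Type*} [DecidableEq α] {a b : α} (h : a ≠ b)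
    (s : Finset α) : insert a s ∩ insert b s = s := by
  ext x
  simp only [mem_inter, mem_insert]
  grind

namespace RandomSubset

variable {ι : Type*} {p : ℝ} {A : Finset ι}

/-- The probability that the `p`-random subset of `A` is `E`, for `E ⊆ A`. -/
def weight (p : ℝ) (A E : Finset ι) : ℝ := p ^ #E * (1 - p) ^ (#A - #E)

def expectation (p : ℝ) (A : Finset ι) (f : Finset ι → ℝ) : ℝ :=
  ∑ E ∈ A.powerset, weight p A E * f E

theorem weight_nonneg (hp₀ : 0 ≤ p) (hp₁ : p ≤ 1) (A E : Finset ι) : 0 ≤ weight p A E :=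
  mul_nonneg (pow_nonneg hp₀ _) (pow_nonneg (sub_nonneg.2 hp₁) _)

theorem sum_weight (p : ℝ) (A : Finset ι) : ∑ E ∈ A.powerset, weight p A E = 1 := by
  simp [weight, sum_pow_mul_eq_add_pow]

theorem expectation_const (p c : ℝ) (A : Finset ι) : expectation p A (fun _ => c) = c := by
  simp [expectation, ← sum_mul, sum_weight]

theorem expectation_congr {f g : Finset ι → ℝ} (h : ∀ E ⊆ A, f E = g E) :
    expectation p A f = expectation p A g :=
  sum_congr rfl fun E hE => by rw [h E (mem_powerset.1 hE)]

theorem expectation_mono (hp₀ : 0 ≤ p) (hp₁ : p ≤ 1) {f g : Finset ι → ℝ}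
    (h : ∀ E ⊆ A, f E ≤ g E) : expectation p A f ≤ expectation p A g :=
  sum_le_sum fun E hE =>
    mul_le_mul_of_nonneg_left (h E (mem_powerset.1 hE)) (weight_nonneg hp₀ hp₁ A E)

theorem expectation_nonneg (hp₀ : 0 ≤ p) (hp₁ : p ≤ 1) {f : Finset ι → ℝ}
    (h : ∀ E ⊆ A, 0 ≤ f E) : 0 ≤ expectation p A f := by
  simpa only [expectation_const] using expectation_mono hp₀ hp₁ h

theorem expectation_add (f g : Finset ι → ℝ) :
    expectation p A (fun E => f E + g E) = expectation p A f + expectation p A g := by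
  simp [expectation, mul_add, sum_add_distrib]

theorem expectation_sub (f g : Finset ι → ℝ) :
    expectation p A (fun E => f E - g E) = expectation p A f - expectation p A g := by
  simp [expectation, mul_sub, sum_sub_distrib]

theorem expectation_const_mul (c : ℝ) (f : Finset ι → ℝ) :
    expectation p A (fun E => c * f E) = c * expectation p A f := by
  simp [expectation, mul_sum, mul_left_comm]

theorem expectation_sum {τ : Type*} (J : Finset τ) (f : τ → Finset ι → ℝ) :
    expectation p A (fun E => ∑ j ∈ J, f j E) = ∑ j ∈ J, expectation p A (f j) := by
  simp [expectation, mul_sum, sum_comm (s := A.powerset)]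

theorem expectation_empty (f : Finset ι → ℝ) : expectation p ∅ f = f ∅ := by
  simp [expectation, weight]

variable [DecidableEq ι]

theorem weight_insert_of_subset {a : ι} {E : Finset ι} (ha : a ∉ A) (hE : E ⊆ A) :
    weight p (insert a A) E = (1 - p) * weight p A E := by
  have := card_le_card hE
  rw [weight, weight, card_insert_of_notMem ha, Nat.sub_add_comm this, pow_succ]
  ring

theorem weight_insert_insert {a : ι} {E : Finset ι} (ha : a ∉ A) (hE : E ⊆ A) :
    weight p (insert a A) (insert a E) = p * weight p A E := by
  rw [weight, weight, card_insert_of_notMem ha, card_insert_of_notMem (fun h => ha (hE h)),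
    Nat.add_sub_add_right, pow_succ]
  ring

theorem expectation_insert {a : ι} (ha : a ∉ A) (f : Finset ι → ℝ) :
    expectation p (insert a A) f =
      p * expectation p A (fun E => f (insert a E)) + (1 - p) * expectation p A f := by
  rw [expectation, sum_powerset_insert ha, add_comm, expectation, expectation, mul_sum, mul_sum]
  congr 1 <;> refine sum_congr rfl fun E hE => ?_
  · rw [weight_insert_insert ha (mem_powerset.1 hE), mul_assoc]
  · rw [weight_insert_of_subset ha (mem_powerset.1 hE), mul_assoc]

theorem expectation_union {B : Finset ι} (h : Disjoint A B) (f : Finset ι → ℝ) :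
    expectation p (A ∪ B) f =
      expectation p A (fun E => expectation p B (fun F => f (E ∪ F))) := by
  induction B using Finset.induction_on generalizing f with
  | empty => simp [expectation_empty]
  | insert b B hb ih =>
    rw [disjoint_insert_right] at h
    simp only [union_insert, expectation_insert hb, expectation_add, expectation_const_mul]
    rw [expectation_insert (by simp [h.1, hb]), ih h.2, ih h.2]

def subsetIndicator (D E : Finset ι) : ℝ := if D ⊆ E then 1 else 0

theorem subsetIndicator_nonneg (D E : Finset ι) : 0 ≤ subsetIndicator D E := by
  unfold subsetIndicator; split_ifs <;> norm_num

theorem subsetIndicator_le_one (D E : Finset ι) : subsetIndicator D E ≤ 1 := by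
  unfold subsetIndicator; split_ifs <;> norm_num

theorem subsetIndicator_monotone (D : Finset ι) : Monotone (subsetIndicator D) := by
  intro E F hEF
  unfold subsetIndicator
  split_ifs with hE hF hF
  exacts [le_rfl, absurd (hE.trans hEF) hF, zero_le_one, le_rfl]

theorem subsetIndicator_union (D D' E : Finset ι) :
    subsetIndicator (D ∪ D') E = subsetIndicator D E * subsetIndicator D' E := by
  unfold subsetIndicator
  by_cases h : D ⊆ E <;> by_cases h' : D' ⊆ E <;> simp [union_subset_iff, h, h']

theorem subsetIndicator_sdiff_of_disjoint {D D' : Finset ι} (h : Disjoint D D')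
    (E : Finset ι) : subsetIndicator D (E \ D') = subsetIndicator D E := by
  simp [subsetIndicator, subset_sdiff, h]

theorem expectation_subsetIndicator_self (p : ℝ) (D : Finset ι) :
    expectation p D (subsetIndicator D) = p ^ #D := by
  rw [expectation, sum_eq_single_of_mem D (mem_powerset_self D)]
  · simp [weight, subsetIndicator]
  · intro F hF hFD
    simp [subsetIndicator, (ssubset_of_subset_of_ne (mem_powerset.1 hF) hFD).not_subset]

theorem expectation_subsetIndicator_mul {D : Finset ι} (hD : D ⊆ A) {g : Finset ι → ℝ}
    (hg : ∀ E, g (E \ D) = g E) :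
    expectation p A (fun E => subsetIndicator D E * g E) = p ^ #D * expectation p A g := by
  rw [← sdiff_union_of_subset hD, expectation_union sdiff_disjoint,
    expectation_union sdiff_disjoint, ← expectation_const_mul]
  refine expectation_congr fun E hE => ?_
  have hED : Disjoint E D := disjoint_of_subset_left hE sdiff_disjoint
  have hgE : ∀ F ⊆ D, g (E ∪ F) = g E := fun F hF => by
    rw [← hg, union_sdiff_distrib, sdiff_eq_empty_iff_subset.2 hF, union_empty,
      sdiff_eq_self_of_disjoint hED]
  have hind : ∀ F ⊆ D, subsetIndicator D (E ∪ F) = subsetIndicator D F := fun F _ => by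
    have : D ⊆ E ∪ F ↔ D ⊆ F :=
      ⟨fun h => Disjoint.left_le_of_le_sup_left h hED.symm, fun h => h.trans subset_union_right⟩
    simp only [subsetIndicator, this]
  rw [expectation_congr fun F hF => by rw [hind F hF, hgE F hF, mul_comm],
    expectation_const_mul, expectation_subsetIndicator_self, expectation_congr hgE,
    expectation_const, mul_comm]

theorem expectation_subsetIndicator {D : Finset ι} (hD : D ⊆ A) :
    expectation p A (subsetIndicator D) = p ^ #D := by
  simpa [expectation_const] using
    expectation_subsetIndicator_mul (p := p) hD (g := fun _ => 1) fun _ => rfl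

theorem weight_inter_mul_weight_union {s t : Finset ι} (hs : s ⊆ A) (ht : t ⊆ A) :
    weight p A (s ∩ t) * weight p A (s ∪ t) = weight p A s * weight p A t := by
  have h₁ := card_union_add_card_inter s t
  have h₂ := card_le_card (union_subset hs ht)
  have h₃ := card_le_card (inter_subset_left : s ∩ t ⊆ s)
  have h₄ := card_le_card hs
  have h₅ := card_le_card ht
  calc weight p A (s ∩ t) * weight p A (s ∪ t)
      = p ^ (#(s ∩ t) + #(s ∪ t)) * (1 - p) ^ ((#A - #(s ∩ t)) + (#A - #(s ∪ t))) := by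
        simp only [weight]; ring
    _ = p ^ (#s + #t) * (1 - p) ^ ((#A - #s) + (#A - #t)) := by congr 2 <;> omega
    _ = weight p A s * weight p A t := by simp only [weight]; ring

/-- Harris' inequality. -/
theorem expectation_mul_le_of_monotone_of_antitone (hp₀ : 0 ≤ p) (hp₁ : p ≤ 1)
    {f g : Finset ι → ℝ} (hf₀ : 0 ≤ f) (hg₀ : 0 ≤ g) (hf : Monotone f) (hg : Antitone g) :
    expectation p A (fun E => f E * g E) ≤ expectation p A f * expectation p A g := by
  have hw := weight_nonneg hp₀ hp₁ A
  have key := A.four_functions_theorem (f₁ := fun E => weight p A E * (f E * g E))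
    (f₂ := weight p A) (f₃ := fun E => weight p A E * g E) (f₄ := fun E => weight p A E * f E)
    (fun E => mul_nonneg (hw E) (mul_nonneg (hf₀ E) (hg₀ E))) hw
    (fun E => mul_nonneg (hw E) (hg₀ E)) (fun E => mul_nonneg (hw E) (hf₀ E))
    (fun s hs t ht => ?_) subset_rfl subset_rfl
  · simpa [powerset_infs_powerset_self, powerset_sups_powerset_self, sum_weight, expectation,
      mul_comm] using key
  · calc weight p A s * (f s * g s) * weight p A t
        = weight p A (s ∩ t) * weight p A (s ∪ t) * (f s * g s) := by
          rw [weight_inter_mul_weight_union hs ht]; ring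
      _ ≤ weight p A (s ∩ t) * weight p A (s ∪ t) * (f (s ∪ t) * g (s ∩ t)) := by
          gcongr
          · exact mul_nonneg (hw _) (hw _)
          · exact hg₀ _
          · exact hf₀ _
          · exact hf subset_union_left
          · exact hg inter_subset_left
      _ = weight p A (s ∩ t) * g (s ∩ t) * (weight p A (s ∪ t) * f (s ∪ t)) := by ring

section Janson

variable {τ : Type*} (D : τ → Finset ι)

def noneOccur (J : Finset τ) (E : Finset ι) : ℝ := ∏ j ∈ J, (1 - subsetIndicator (D j) E)

/-- The neighbourhood of `t` in the dependency graph of the events `D t ⊆ E`. -/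
def neighbors [DecidableEq τ] (T : Finset τ) (t : τ) : Finset τ :=
  {t' ∈ T.erase t | ¬Disjoint (D t) (D t')}

theorem noneOccur_nonneg (J : Finset τ) (E : Finset ι) : 0 ≤ noneOccur D J E :=
  prod_nonneg fun _ _ => sub_nonneg.2 (subsetIndicator_le_one _ _)

theorem noneOccur_le_one (J : Finset τ) (E : Finset ι) : noneOccur D J E ≤ 1 :=
  prod_le_one (fun _ _ => sub_nonneg.2 (subsetIndicator_le_one _ _))
    fun _ _ => sub_le_self _ (subsetIndicator_nonneg _ _)

theorem noneOccur_antitone (J : Finset τ) : Antitone (noneOccur D J) := fun _ _ h =>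
  prod_le_prod (fun _ _ => sub_nonneg.2 (subsetIndicator_le_one _ _))
    fun _ _ => sub_le_sub_left (subsetIndicator_monotone _ h) _

theorem noneOccur_sdiff {J : Finset τ} {i : τ} (h : ∀ j ∈ J, Disjoint (D j) (D i))
    (E : Finset ι) : noneOccur D J (E \ D i) = noneOccur D J E :=
  prod_congr rfl fun j hj => by rw [subsetIndicator_sdiff_of_disjoint (h j hj)]

theorem subsetIndicator_mul_noneOccur_ge (i : τ) (J : Finset τ) (E : Finset ι) :
    subsetIndicator (D i) E * noneOccur D {j ∈ J | Disjoint (D i) (D j)} E -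
        (∑ j ∈ J with ¬Disjoint (D i) (D j), subsetIndicator (D i ∪ D j) E) *
          noneOccur D {j ∈ J | Disjoint (D i) (D j)} E ≤
      subsetIndicator (D i) E * noneOccur D J E := by
  set χ := fun j => subsetIndicator (D j) E
  set N₀ := noneOccur D {j ∈ J | Disjoint (D i) (D j)} E
  have hW := one_sub_sum_le_prod_one_sub (J := {j ∈ J | ¬Disjoint (D i) (D j)}) (x := χ)
    (fun _ _ => subsetIndicator_nonneg _ _) (fun _ _ => subsetIndicator_le_one _ _)
  calc χ i * N₀ - (∑ j ∈ J with ¬Disjoint (D i) (D j), subsetIndicator (D i ∪ D j) E) * N₀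
      = χ i * N₀ * (1 - ∑ j ∈ J with ¬Disjoint (D i) (D j), χ j) := by
        simp only [χ, subsetIndicator_union, ← mul_sum]; ring
    _ ≤ χ i * N₀ * ∏ j ∈ J with ¬Disjoint (D i) (D j), (1 - χ j) :=
        mul_le_mul_of_nonneg_left hW
          (mul_nonneg (subsetIndicator_nonneg _ _) (noneOccur_nonneg _ _ _))
    _ = χ i * noneOccur D J E := by
        rw [mul_assoc, noneOccur,
          ← prod_filter_mul_prod_filter_not J (fun j => Disjoint (D i) (D j))]
        rfl

theorem mul_expectation_noneOccur_filter_le (hp₀ : 0 ≤ p) (hp₁ : p ≤ 1) {i : τ}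
    {J : Finset τ} (hi : D i ⊆ A) (hJ : ∀ j ∈ J, D j ⊆ A) :
    (p ^ #(D i) - ∑ j ∈ J with ¬Disjoint (D i) (D j), p ^ #(D i ∪ D j)) *
        expectation p A (noneOccur D {j ∈ J | Disjoint (D i) (D j)}) ≤
      expectation p A (fun E => subsetIndicator (D i) E * noneOccur D J E) := by
  set J₀ := {j ∈ J | Disjoint (D i) (D j)}
  set J₁ := {j ∈ J | ¬Disjoint (D i) (D j)}
  set N₀ := noneOccur D J₀
  have hJ₀ : expectation p A (fun E => subsetIndicator (D i) E * N₀ E) =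
      p ^ #(D i) * expectation p A N₀ :=
    expectation_subsetIndicator_mul hi (noneOccur_sdiff D fun j hj => (mem_filter.1 hj).2.symm)
  have hJ₁ : ∀ j ∈ J₁, expectation p A (fun E => subsetIndicator (D i ∪ D j) E * N₀ E) ≤
      p ^ #(D i ∪ D j) * expectation p A N₀ := fun j hj => by
    rw [← expectation_subsetIndicator (union_subset hi (hJ j (mem_filter.1 hj).1))]
    exact expectation_mul_le_of_monotone_of_antitone hp₀ hp₁
      (fun _ => subsetIndicator_nonneg _ _) (fun _ => noneOccur_nonneg _ _ _)
      (subsetIndicator_monotone _) (noneOccur_antitone _ _)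
  calc _ = p ^ #(D i) * expectation p A N₀ -
        ∑ j ∈ J₁, p ^ #(D i ∪ D j) * expectation p A N₀ := by
        rw [← sum_mul]; ring
    _ ≤ expectation p A (fun E => subsetIndicator (D i) E * N₀ E) -
        ∑ j ∈ J₁, expectation p A (fun E => subsetIndicator (D i ∪ D j) E * N₀ E) := by
        rw [hJ₀]; exact sub_le_sub_left (sum_le_sum hJ₁) _
    _ = expectation p A (fun E => subsetIndicator (D i) E * N₀ E -
        (∑ j ∈ J₁, subsetIndicator (D i ∪ D j) E) * N₀ E) := by
        simp only [sum_mul, expectation_sub, expectation_sum]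
    _ ≤ _ := expectation_mono hp₀ hp₁ fun E _ => subsetIndicator_mul_noneOccur_ge D i J E

/-- Conditioned on none of the `D j`, `j ∈ J`, occurring, `D i` still occurs with probability
at least `p ^ #(D i)` minus the joint probabilities with the `D j` that meet it. -/
theorem mul_expectation_noneOccur_le (hp₀ : 0 ≤ p) (hp₁ : p ≤ 1) {i : τ} {J : Finset τ}
    (hi : D i ⊆ A) (hJ : ∀ j ∈ J, D j ⊆ A) :
    (p ^ #(D i) - ∑ j ∈ J with ¬Disjoint (D i) (D j), p ^ #(D i ∪ D j)) *
        expectation p A (noneOccur D J) ≤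
      expectation p A (fun E => subsetIndicator (D i) E * noneOccur D J E) := by
  rcases le_or_gt 0 (p ^ #(D i) - ∑ j ∈ J with ¬Disjoint (D i) (D j), p ^ #(D i ∪ D j))
    with h | h
  · refine le_trans (mul_le_mul_of_nonneg_left ?_ h)
      (mul_expectation_noneOccur_filter_le D hp₀ hp₁ hi hJ)
    refine expectation_mono hp₀ hp₁ fun E _ => ?_
    rw [noneOccur, ← prod_filter_mul_prod_filter_not J (fun j => Disjoint (D i) (D j))]
    exact mul_le_of_le_one_right (noneOccur_nonneg _ _ _) (noneOccur_le_one _ _ _)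
  · refine le_trans (mul_nonpos_of_nonpos_of_nonneg h.le ?_) (expectation_nonneg hp₀ hp₁ ?_)
    · exact expectation_nonneg hp₀ hp₁ fun E _ => noneOccur_nonneg _ _ _
    · exact fun E _ => mul_nonneg (subsetIndicator_nonneg _ _) (noneOccur_nonneg _ _ _)

/-- Janson's inequality. -/
theorem expectation_noneOccur_le_exp [DecidableEq τ] (hp₀ : 0 ≤ p) (hp₁ : p ≤ 1)
    {T : Finset τ} (hT : ∀ t ∈ T, D t ⊆ A) :
    expectation p A (noneOccur D T) ≤
      Real.exp (∑ t ∈ T, (∑ t' ∈ neighbors D T t, p ^ #(D t ∪ D t') - p ^ #(D t))) := by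
  suffices ∀ J ⊆ T, expectation p A (noneOccur D J) ≤
      Real.exp (∑ t ∈ J, (∑ t' ∈ neighbors D T t, p ^ #(D t ∪ D t') - p ^ #(D t))) from
    this T subset_rfl
  intro J
  induction J using Finset.induction_on with
  | empty =>
    intro _
    rw [show noneOccur D ∅ = fun _ => 1 from funext fun _ => prod_empty, expectation_const]
    simp
  | insert i J hi ih =>
    intro hJT
    have hiT := hJT (mem_insert_self i J)
    have hJT' := (subset_insert i J).trans hJT
    have hN : 0 ≤ expectation p A (noneOccur D J) :=
      expectation_nonneg hp₀ hp₁ fun E _ => noneOccur_nonneg D J E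
    have hstep := mul_expectation_noneOccur_le D hp₀ hp₁ (hT i hiT) fun j hj => hT j (hJT' hj)
    have hΔ : ∑ j ∈ J with ¬Disjoint (D i) (D j), p ^ #(D i ∪ D j) ≤
        ∑ t' ∈ neighbors D T i, p ^ #(D i ∪ D t') :=
      sum_le_sum_of_subset_of_nonneg
        (filter_subset_filter _ (subset_erase.2 ⟨hJT', hi⟩)) fun _ _ _ => pow_nonneg hp₀ _
    set Δ := ∑ t' ∈ neighbors D T i, p ^ #(D i ∪ D t')
    calc expectation p A (noneOccur D (insert i J))
        = expectation p A (noneOccur D J) -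
            expectation p A (fun E => subsetIndicator (D i) E * noneOccur D J E) := by
          rw [← expectation_sub]
          exact expectation_congr fun E _ => by rw [noneOccur, prod_insert hi, noneOccur]; ring
      _ ≤ (Δ - p ^ #(D i) + 1) * expectation p A (noneOccur D J) := by
          nlinarith [mul_le_mul_of_nonneg_right hΔ hN]
      _ ≤ Real.exp (Δ - p ^ #(D i)) *
            Real.exp (∑ t ∈ J, (∑ t' ∈ neighbors D T t, p ^ #(D t ∪ D t') - p ^ #(D t))) :=
          mul_le_mul (Real.add_one_le_exp _) (ih hJT') hN (Real.exp_nonneg _)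
      _ = _ := by rw [sum_insert hi, Real.exp_add]

end Janson

end RandomSubset

open RandomSubset

section CrossingTrails

variable {α : Type*} [DecidableEq α]

/-- `⟨(u, v), W⟩` encodes the `1`-offset trail with edges `insert u W` and `insert v W`. -/
def crossingTriples [Fintype α] (k : ℕ) (S : Finset α) : Finset (Σ _ : α × α, Finset α) :=
  (S ×ˢ Sᶜ).sigma fun uv => powersetCard (k - 1) {uv.1, uv.2}ᶜ

def trailEdges (t : Σ _ : α × α, Finset α) : Finset (Finset α) :=
  {insert t.1.1 t.2, insert t.1.2 t.2}

variable [Fintype α] {k : ℕ} {S : Finset α}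

theorem mem_crossingTriples {u v : α} {W : Finset α} :
    ⟨(u, v), W⟩ ∈ crossingTriples k S ↔ u ∈ S ∧ v ∉ S ∧ #W = k - 1 ∧ u ∉ W ∧ v ∉ W := by
  simp only [crossingTriples, mem_sigma, mem_product, mem_compl, mem_powersetCard,
    subset_compl_iff_disjoint_right, disjoint_insert_right, disjoint_singleton_right]
  tauto

theorem insert_ne_insert_of_mem_crossingTriples {u v : α} {W : Finset α}
    (ht : ⟨(u, v), W⟩ ∈ crossingTriples k S) : insert u W ≠ insert v W := by
  obtain ⟨hu, hv, -, huW, -⟩ := mem_crossingTriples.1 ht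
  intro h
  simpa [h] using insert_sdiff_insert' (ne_of_mem_of_not_mem hu hv) huW

theorem card_trailEdges {t : Σ _ : α × α, Finset α} (ht : t ∈ crossingTriples k S) :
    #(trailEdges t) = 2 :=
  card_pair (insert_ne_insert_of_mem_crossingTriples ht)

theorem card_of_mem_trailEdges (hk : 1 ≤ k) {t : Σ _ : α × α, Finset α}
    (ht : t ∈ crossingTriples k S) {e : Finset α} (he : e ∈ trailEdges t) : #e = k := by
  obtain ⟨⟨u, v⟩, W⟩ := t
  obtain ⟨-, -, hW, huW, hvW⟩ := mem_crossingTriples.1 ht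
  simp only [trailEdges, mem_insert, mem_singleton] at he
  rcases he with rfl | rfl
  · rw [card_insert_of_notMem huW, hW]; omega
  · rw [card_insert_of_notMem hvW, hW]; omega

theorem eq_sdiff_of_mem_trailEdges {u v : α} {W : Finset α}
    (ht : ⟨(u, v), W⟩ ∈ crossingTriples k S) {e : Finset α} (he : e ∈ trailEdges ⟨(u, v), W⟩) :
    W = e \ {u, v} := by
  obtain ⟨-, -, -, huW, hvW⟩ := mem_crossingTriples.1 ht
  simp only [trailEdges, mem_insert, mem_singleton] at he
  rcases he with rfl | rfl <;> ext x <;> simp <;> grind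

theorem trailEdges_injOn :
    Set.InjOn trailEdges (↑(crossingTriples k S) : Set (Σ _ : α × α, Finset α)) := by
  rintro ⟨⟨u, v⟩, W⟩ ht ⟨⟨u', v'⟩, W'⟩ ht' h
  obtain ⟨hu, hv, -, huW, hvW⟩ := mem_crossingTriples.1 ht
  obtain ⟨hu', hv', -, huW', hvW'⟩ := mem_crossingTriples.1 ht'
  have huv := ne_of_mem_of_not_mem hu hv
  have huv' := ne_of_mem_of_not_mem hu' hv'
  have hpair := congrArg ((↑) : Finset (Finset α) → Set (Finset α)) h
  simp only [trailEdges, coe_pair] at hpair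
  rcases Set.pair_eq_pair_iff.1 hpair with ⟨h₁, h₂⟩ | ⟨h₁, h₂⟩
  · have hW : W = W' := by
      rw [← insert_inter_insert_of_ne huv W, h₁, h₂, insert_inter_insert_of_ne huv' W']
    subst hW
    have hu_eq := insert_sdiff_insert' huv huW
    have hv_eq := insert_sdiff_insert' huv.symm hvW
    rw [h₁, h₂, insert_sdiff_insert' huv' huW', singleton_inj] at hu_eq
    rw [h₁, h₂, insert_sdiff_insert' huv'.symm hvW', singleton_inj] at hv_eq
    rw [hu_eq, hv_eq]
  · have := insert_sdiff_insert' huv huW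
    rw [h₁, h₂, insert_sdiff_insert' huv'.symm hvW', singleton_inj] at this
    exact absurd (this ▸ hu) hv'

theorem card_crossingTriples (k : ℕ) (S : Finset α) :
    #(crossingTriples k S) = #S * (Fintype.card α - #S) * (Fintype.card α - 2).choose (k - 1) := by
  rw [crossingTriples, card_sigma, sum_const_nat, card_product, card_compl]
  rintro ⟨u, v⟩ huv
  obtain ⟨hu, hv⟩ := mem_product.1 huv
  rw [card_powersetCard, card_compl, card_pair (ne_of_mem_of_not_mem hu (mem_compl.1 hv))]

theorem card_filter_mem_trailEdges_le (e : Finset α) :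
    #{t ∈ crossingTriples k S | e ∈ trailEdges t} ≤ 2 * (#e * Fintype.card α) := by
  calc #{t ∈ crossingTriples k S | e ∈ trailEdges t}
      ≤ #(e ×ˢ (univ : Finset α) ∪ (univ : Finset α) ×ˢ e) := by
        refine card_le_card_of_injOn (fun t => t.1) ?_ ?_
        · rintro ⟨⟨u, v⟩, W⟩ ht
          simp only [coe_filter, Set.mem_ofPred_eq, trailEdges, mem_insert, mem_singleton] at ht
          rcases ht.2 with rfl | rfl <;> simp
        · rintro ⟨⟨u, v⟩, W⟩ ht ⟨⟨u', v'⟩, W'⟩ ht' h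
          obtain ⟨ht, he⟩ := mem_filter.1 ht
          obtain ⟨ht', he'⟩ := mem_filter.1 ht'
          obtain ⟨rfl, rfl⟩ := Prod.mk.inj h
          rw [eq_sdiff_of_mem_trailEdges ht he, eq_sdiff_of_mem_trailEdges ht' he']
    _ ≤ 2 * (#e * Fintype.card α) := by
        grw [card_union_le]
        rw [card_product, card_product, card_univ, mul_comm (Fintype.card α)]
        omega

theorem card_neighbors_le (hk : 1 ≤ k) {t : Σ _ : α × α, Finset α}
    (ht : t ∈ crossingTriples k S) :
    #(neighbors trailEdges (crossingTriples k S) t) ≤ 4 * (k * Fintype.card α) := by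
  have hsub : neighbors trailEdges (crossingTriples k S) t ⊆
      (trailEdges t).biUnion fun e => {t' ∈ crossingTriples k S | e ∈ trailEdges t'} := by
    intro t' ht'
    obtain ⟨ht', hmeet⟩ := mem_filter.1 ht'
    obtain ⟨e, he, he'⟩ := not_disjoint_iff.1 hmeet
    exact mem_biUnion.2 ⟨e, he, mem_filter.2 ⟨mem_of_mem_erase ht', he'⟩⟩
  calc #(neighbors trailEdges (crossingTriples k S) t)
      ≤ ∑ e ∈ trailEdges t, #{t' ∈ crossingTriples k S | e ∈ trailEdges t'} :=
        (card_le_card hsub).trans card_biUnion_le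
    _ ≤ ∑ e ∈ trailEdges t, 2 * (k * Fintype.card α) := sum_le_sum fun e he => by
        simpa only [card_of_mem_trailEdges hk ht he] using card_filter_mem_trailEdges_le e
    _ = 4 * (k * Fintype.card α) := by rw [sum_const, card_trailEdges ht]; ring

theorem sum_neighbors_le (hk : 1 ≤ k) {p : ℝ} (hp₀ : 0 ≤ p) (hp₁ : p ≤ 1)
    {t : Σ _ : α × α, Finset α} (ht : t ∈ crossingTriples k S) :
    ∑ t' ∈ neighbors trailEdges (crossingTriples k S) t, p ^ #(trailEdges t ∪ trailEdges t') ≤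
      4 * (k * Fintype.card α) * p ^ 3 := by
  have hterm : ∀ t' ∈ neighbors trailEdges (crossingTriples k S) t,
      p ^ #(trailEdges t ∪ trailEdges t') ≤ p ^ 3 := by
    intro t' ht'
    obtain ⟨ht', -⟩ := mem_filter.1 ht'
    obtain ⟨hne, ht'⟩ := mem_erase.1 ht'
    refine pow_le_pow_of_le_one hp₀ hp₁ ?_
    have hnsub : ¬trailEdges t ⊆ trailEdges t' := fun h =>
      hne (trailEdges_injOn ht ht' (eq_of_subset_of_card_le h
        (by rw [card_trailEdges ht, card_trailEdges ht']))).symm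
    rw [← card_sdiff_add_card, card_trailEdges ht']
    have := card_pos.2 (sdiff_nonempty.2 hnsub)
    omega
  grw [sum_le_card_nsmul _ _ _ hterm, card_neighbors_le hk ht, nsmul_eq_mul]
  push_cast; rfl

end CrossingTrails

section Hypergraph

variable {n k : ℕ}

theorem hasCrossingTrail_of_trailEdges_subset {S : Finset (Fin n)}
    {t : Σ _ : Fin n × Fin n, Finset (Fin n)} (ht : t ∈ crossingTriples k S)
    {E : Finset (Finset (Fin n))} (hE : trailEdges t ⊆ E) : HasCrossingTrail n k S E := by
  obtain ⟨⟨u, v⟩, W⟩ := t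
  have hne := insert_ne_insert_of_mem_crossingTriples ht
  obtain ⟨hu, hv, hW, huW, hvW⟩ := mem_crossingTriples.1 ht
  have huv := ne_of_mem_of_not_mem hu hv
  refine ⟨insert u W, hE (by simp [trailEdges]), insert v W, hE (by simp [trailEdges]), hne, ?_,
    u, v, insert_sdiff_insert' huv huW, insert_sdiff_insert' huv.symm hvW, Or.inl ⟨hu, hv⟩⟩
  rw [insert_inter_insert_of_ne huv W, hW]

theorem trailEdges_subset_kSets (hk : 1 ≤ k) {S : Finset (Fin n)}
    {t : Σ _ : Fin n × Fin n, Finset (Fin n)} (ht : t ∈ crossingTriples k S) :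
    trailEdges t ⊆ kSets n k := fun _ he =>
  mem_powersetCard.2 ⟨subset_univ _, card_of_mem_trailEdges hk ht he⟩

theorem prH_eq_expectation (p : ℝ) (P : Finset (Finset (Fin n)) → Prop) :
    prH n k p P = expectation p (kSets n k) (fun E => if P E then 1 else 0) := by
  simp [prH, expectation, weight]

theorem prH_le_abs_add_abs_pow (p : ℝ) (P : Finset (Finset (Fin n)) → Prop) :
    prH n k p P ≤ (|p| + |1 - p|) ^ #(kSets n k) := by
  rw [← sum_pow_mul_eq_add_pow, prH]
  refine sum_le_sum fun E _ => ?_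
  split_ifs
  · rw [← abs_pow, ← abs_pow, ← abs_mul]
    exact le_abs_self _
  · positivity

theorem prH_not_hasCrossingTrail_le (hk : 1 ≤ k) {p : ℝ} (hp₀ : 0 ≤ p) (hp₁ : p ≤ 1)
    (S : Finset (Fin n)) :
    prH n k p (fun E => ¬HasCrossingTrail n k S E) ≤
      Real.exp (-#(crossingTriples k S) * p ^ 2 * (1 - 4 * k * n * p)) := by
  set T := crossingTriples k S
  calc prH n k p (fun E => ¬HasCrossingTrail n k S E)
      ≤ expectation p (kSets n k) (noneOccur trailEdges T) := by
        rw [prH_eq_expectation]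
        refine expectation_mono hp₀ hp₁ fun E _ => ?_
        by_cases h : HasCrossingTrail n k S E
        · rw [if_neg (not_not_intro h)]
          exact noneOccur_nonneg _ _ _
        · rw [if_pos h, noneOccur, prod_eq_one fun t ht => ?_]
          rw [subsetIndicator, if_neg fun hE => h (hasCrossingTrail_of_trailEdges_subset ht hE),
            sub_zero]
    _ ≤ Real.exp (∑ t ∈ T, (∑ t' ∈ neighbors trailEdges T t,
          p ^ #(trailEdges t ∪ trailEdges t') - p ^ #(trailEdges t))) :=
        expectation_noneOccur_le_exp _ hp₀ hp₁ fun t ht => trailEdges_subset_kSets hk ht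
    _ ≤ Real.exp (∑ t ∈ T, (4 * (k * n) * p ^ 3 - p ^ 2)) := by
        refine Real.exp_le_exp.2 (sum_le_sum fun t ht => ?_)
        have := sum_neighbors_le hk hp₀ hp₁ ht
        rw [Fintype.card_fin] at this
        rw [card_trailEdges ht]
        linarith
    _ = _ := by rw [sum_const, nsmul_eq_mul]; ring_nf

end Hypergraph

section Asymptotics

open Asymptotics Topology

variable {k : ℕ} {ε : ℝ}

noncomputable def edgeProb (k : ℕ) (ε : ℝ) (n : ℕ) : ℝ :=
  (1 + ε) * Real.sqrt (((k - 1).factorial : ℝ) * Real.log n / (n : ℝ) ^ k)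

theorem edgeProb_nonneg (hε : 0 ≤ ε) (n : ℕ) : 0 ≤ edgeProb k ε n :=
  mul_nonneg (by linarith) (Real.sqrt_nonneg _)

theorem edgeProb_sq (n : ℕ) :
    edgeProb k ε n ^ 2 = (1 + ε) ^ 2 * ((k - 1).factorial * Real.log n / (n : ℝ) ^ k) := by
  rw [edgeProb, mul_pow, Real.sq_sqrt]
  have : 0 ≤ Real.log n := Real.log_natCast_nonneg n
  positivity

theorem tendsto_natCast_mul_edgeProb (hk : 3 ≤ k) (hε : 0 ≤ ε) :
    Tendsto (fun n : ℕ => n * edgeProb k ε n) atTop (𝓝 0) := by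
  have hlog : Tendsto (fun n : ℕ => (1 + ε) * √((k - 1).factorial * (Real.log n / n)))
      atTop (𝓝 0) := by
    have := Real.isLittleO_log_id_atTop.tendsto_div_nhds_zero.comp tendsto_natCast_atTop_atTop
    simpa using ((this.const_mul ((k - 1).factorial : ℝ)).sqrt).const_mul (1 + ε)
  refine squeeze_zero' (Eventually.of_forall fun n =>
    mul_nonneg n.cast_nonneg (edgeProb_nonneg hε n)) ?_ hlog
  filter_upwards [eventually_ge_atTop 1] with n hn
  have hn : (1 : ℝ) ≤ n := by exact_mod_cast hn
  have hlog : 0 ≤ Real.log n := Real.log_nonneg hn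
  have hpow : (n : ℝ) ^ 3 ≤ (n : ℝ) ^ k := pow_le_pow_right₀ hn hk
  calc (n : ℝ) * edgeProb k ε n
      = (1 + ε) * √((n : ℝ) ^ 2 * ((k - 1).factorial * Real.log n / (n : ℝ) ^ k)) := by
        rw [edgeProb, Real.sqrt_mul (sq_nonneg _), Real.sqrt_sq (Nat.cast_nonneg n)]; ring
    _ ≤ (1 + ε) * √((k - 1).factorial * (Real.log n / n)) := by
        gcongr (1 + ε) * √?_
        rw [show (n : ℝ) ^ 2 * ((k - 1).factorial * Real.log n / (n : ℝ) ^ k) =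
            (k - 1).factorial * (Real.log n / n) * ((n : ℝ) ^ 3 / (n : ℝ) ^ k) by
          field_simp]
        exact mul_le_of_le_one_right (by positivity) (div_le_one_of_le₀ hpow (by positivity))

theorem eventually_edgeProb_le_one (hk : 3 ≤ k) (hε : 0 ≤ ε) :
    ∀ᶠ n in atTop, edgeProb k ε n ≤ 1 := by
  filter_upwards [(tendsto_natCast_mul_edgeProb hk hε).eventually_le_const zero_lt_one,
    eventually_ge_atTop 1] with n hn hn₁
  have hn₁ : (1 : ℝ) ≤ n := by exact_mod_cast hn₁
  nlinarith [edgeProb_nonneg (k := k) hε n]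

theorem tendsto_descFactorial_sub_div_pow (m j : ℕ) :
    Tendsto (fun n : ℕ => ((n - m).descFactorial j : ℝ) / (n : ℝ) ^ j) atTop (𝓝 1) := by
  have hz : ∀ᶠ n : ℕ in atTop, (n : ℝ) ≠ 0 :=
    (eventually_ge_atTop 1).mono fun n hn => by positivity
  have hsub : (fun n : ℕ => ((n - m : ℕ) : ℝ)) ~[atTop] (fun n : ℕ => (n : ℝ)) := by
    rw [isEquivalent_iff_tendsto_one hz, ← tendsto_add_atTop_iff_nat m]
    simpa using tendsto_natCast_div_add_atTop (m : ℝ)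
  have := ((isEquivalent_descFactorial j).comp_tendsto (tendsto_sub_atTop_nat m)).trans
    (hsub.pow j)
  exact (isEquivalent_iff_tendsto_one (hz.mono fun n hn => pow_ne_zero j hn)).1 this

/-- `1 + mainError` is `#T p² (1 - 4 k n p)` divided by `(1 + ε)² s (n - s) / n · log n`,
where `#T = s (n - s) C(n - 2, k - 1)`. -/
noncomputable def mainError (k : ℕ) (ε : ℝ) (n : ℕ) : ℝ :=
  ((n - 2).descFactorial (k - 1) : ℝ) / (n : ℝ) ^ (k - 1) * (1 - 4 * k * (n * edgeProb k ε n)) - 1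

theorem tendsto_mainError (hk : 3 ≤ k) (hε : 0 ≤ ε) : Tendsto (mainError k ε) atTop (𝓝 0) := by
  have h := (tendsto_natCast_mul_edgeProb hk hε).const_mul (4 * k : ℝ)
  have := ((tendsto_descFactorial_sub_div_pow 2 (k - 1)).mul (h.const_sub 1)).sub_const 1
  rw [show (0 : ℝ) = 1 * (1 - 4 * k * 0) - 1 by ring]
  exact this

end Asymptotics

section Estimates

variable {n k : ℕ} {ε : ℝ} {S : Finset (Fin n)}

theorem prH_not_hasCrossingTrail_le_main (hk : 1 ≤ k) (hε : 0 ≤ ε) (hn : n ≠ 0)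
    (hp : edgeProb k ε n ≤ 1) :
    prH n k (edgeProb k ε n) (fun E => ¬HasCrossingTrail n k S E) ≤
      Real.exp (-(1 + mainError k ε n) * (1 + ε) ^ 2 * (#S : ℝ) *
        (((n : ℝ) - #S) / n) * Real.log n) := by
  refine (prH_not_hasCrossingTrail_le hk (edgeProb_nonneg hε n) hp S).trans_eq
    (congrArg Real.exp ?_)
  have hS : #S ≤ n := by simpa using card_le_univ S
  have hn' : (n : ℝ) ≠ 0 := by exact_mod_cast hn
  rw [card_crossingTriples, Fintype.card_fin, mainError, edgeProb_sq,
    Nat.descFactorial_eq_factorial_mul_choose, ← pow_sub_one_mul (by omega : k ≠ 0)]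
  push_cast [hS]
  field_simp
  ring

/-- For finitely many `n` any values `δ n` will do (there `edgeProb` may exceed `1`); this one
turns the trivial bound `prH_le_abs_add_abs_pow` into the required form, as
`2 s (n - s) / n ≥ 1`. -/
noncomputable def smallError (k : ℕ) (ε : ℝ) (n : ℕ) : ℝ :=
  -1 - 2 * Real.log ((|edgeProb k ε n| + |1 - edgeProb k ε n|) ^ #(kSets n k)) /
    ((1 + ε) ^ 2 * Real.log n)

theorem prH_not_hasCrossingTrail_le_small (hε : 0 ≤ ε) (hS₁ : 1 ≤ #S) (hS₂ : 2 * #S ≤ n) :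
    prH n k (edgeProb k ε n) (fun E => ¬HasCrossingTrail n k S E) ≤
      Real.exp (-(1 + smallError k ε n) * (1 + ε) ^ 2 * (#S : ℝ) *
        (((n : ℝ) - #S) / n) * Real.log n) := by
  set p := edgeProb k ε n
  set G := (|p| + |1 - p|) ^ #(kSets n k)
  have hG : 1 ≤ G := one_le_pow₀ (by linarith [le_abs_self p, le_abs_self (1 - p)])
  have hlog : 0 < Real.log n := Real.log_pos (by exact_mod_cast (by omega : 1 < n))
  have hn : (0 : ℝ) < n := by exact_mod_cast (by omega : 0 < n)
  have hS₁' : (1 : ℝ) ≤ #S := by exact_mod_cast hS₁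
  have hS₂' : 2 * (#S : ℝ) ≤ n := by exact_mod_cast hS₂
  have hfrac : 1 ≤ 2 * (#S : ℝ) * (((n : ℝ) - #S) / n) := by
    rw [← mul_div_assoc, one_le_div hn]
    nlinarith
  calc prH n k p (fun E => ¬HasCrossingTrail n k S E) ≤ G := prH_le_abs_add_abs_pow p _
    _ = Real.exp (Real.log G) := (Real.exp_log (by positivity)).symm
    _ ≤ Real.exp (Real.log G * (2 * #S * ((n - #S) / n))) :=
        Real.exp_le_exp.2 (le_mul_of_one_le_right (Real.log_nonneg hG) hfrac)
    _ = _ := by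
        congr 1
        rw [smallError]
        field_simp
        ring

end Estimates

/-- Let `k ≥ 3`, `ε > 0` and `p = (1+ε)·√((k-1)!·log n / n^k)`. Then, uniformly over
all sets `S ⊆ [n]` with `1 ≤ |S| = s ≤ n/2`, the probability that `H_{n,p}^{(k)}`
contains no `1`-offset trail of exactly `2` edges with one endpoint in `S` and the
other in `[n] \ S` is at most `exp(-(1+o(1))·(1+ε)²·s·((n-s)/n)·log n)`. -/
theorem prob_no_crossing_trail (k : ℕ) (hk : 3 ≤ k) (ε : ℝ) (hε : 0 < ε) :
    ∃ δ : ℕ → ℝ, Tendsto δ atTop (nhds 0) ∧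
      ∀ (n : ℕ) (S : Finset (Fin n)), 1 ≤ S.card → 2 * S.card ≤ n →
        prH n k
            ((1 + ε) * Real.sqrt (((k - 1).factorial : ℝ) * Real.log n / (n : ℝ) ^ k))
            (fun E => ¬ HasCrossingTrail n k S E) ≤
          Real.exp (-(1 + δ n) * (1 + ε) ^ 2 * (S.card : ℝ) *
            (((n : ℝ) - (S.card : ℝ)) / (n : ℝ)) * Real.log n) := by
  obtain ⟨N, hN⟩ := eventually_atTop.1 (eventually_edgeProb_le_one hk hε.le)
  refine ⟨fun n => if n < N then smallError k ε n else mainError k ε n, ?_,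
    fun n S hS₁ hS₂ => ?_⟩
  · exact (tendsto_mainError hk hε.le).congr'
      ((eventually_ge_atTop N).mono fun n hn => (if_neg (not_lt.2 hn)).symm)
  · dsimp only
    split_ifs with hn
    · exact prH_not_hasCrossingTrail_le_small hε.le hS₁ hS₂
    · exact prH_not_hasCrossingTrail_le_main (by omega) hε.le (by omega) (hN n (not_lt.1 hn))
end
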